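/- arXiv:2102.08639 — 8 statements merged into one kernel-verified Lean document; each statement's English description precedes it below -/
import Mathlib

section
/- Let M be an irreducible stochastic matrix on a finite set V with unique invariant probability distribution ρ. Then for every w ∈ V, ρ_w = det(Id − M^{(w)}) / ∑_{x ∈ V} det(Id − M^{(x)}), where M^{(w)} is M with row and column w deleted. -/
/-- The principal submatrix of `Id - M` obtained by deleting row and column `w`. -/
noncomputable def idSubKernelDeleted {V : Type*} [Fintype V] [DecidableEq V]
    (M : Matrix V V ℝ) (w : V) : Matrix {v : V // v ≠ w} {v : V // v ≠ w} ℝ :=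
  (1 : Matrix {v : V // v ≠ w} {v : V // v ≠ w} ℝ) -
    Matrix.of (fun i j : {v : V // v ≠ w} => M i.1 j.1)

/-!
Put `A = 1 - M`. Its rows sum to zero, and every principal minor `det A⁽ʷ⁾` is nonzero: a
kernel vector of `A⁽ʷ⁾`, extended by `0` at `w` to `u`, is `M`-harmonic off `w`, and by the
maximum principle the set where `|u|` is maximal is closed under the transitions of `M`, so by
irreducibility it reaches `w`, forcing `u = 0`. Hence any kernel vector of `A` or of `Aᵀ` is
determined by its value at a single vertex. As `A * adj A = adj A * A = det A • 1 = 0`, the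
columns of `adj A` are constant, so each row of `adj A` is its diagonal `(det A⁽ˣ⁾)ₓ`, which is
therefore a left kernel vector of `A`, proportional to `ρ`. Normalising gives the formula.
-/

open Finset

namespace Matrix

variable {V R : Type*} [Fintype V]

abbrev deleteRowCol (A : Matrix V V R) (w : V) : Matrix {v // v ≠ w} {v // v ≠ w} R :=
  A.submatrix Subtype.val Subtype.val

lemma deleteRowCol_mulVec [DecidableEq V] [NonUnitalNonAssocSemiring R] (A : Matrix V V R)
    {w : V} {u : V → R} (hu : u w = 0) :
    A.deleteRowCol w *ᵥ (fun i : {v // v ≠ w} => u i) = fun i => (A *ᵥ u) i.1 := by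
  funext i
  simp only [mulVec, dotProduct, submatrix_apply]
  rw [← Finset.sum_filter_of_ne (p := (· ≠ w)) (fun x _ hx hxw => hx (by rw [hxw, hu, mul_zero])),
    ← Finset.sum_subtype_eq_sum_filter, Finset.subtype_univ]

section Kernel

variable [DecidableEq V] [CommRing R] [IsDomain R] {A : Matrix V V R} {w : V}

lemma eq_zero_of_mulVec_eq_zero_of_apply_eq_zero (hA : (A.deleteRowCol w).det ≠ 0) {v : V → R}
    (hv : A *ᵥ v = 0) (hw : v w = 0) : v = 0 := by
  have hrestrict : (fun i : {x // x ≠ w} => v i) = 0 :=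
    eq_zero_of_mulVec_eq_zero hA (by rw [deleteRowCol_mulVec A hw, hv]; rfl)
  funext x
  by_cases hx : x = w
  · rw [hx, hw, Pi.zero_apply]
  · exact congrFun hrestrict ⟨x, hx⟩

lemma smul_eq_smul_of_mulVec_eq_zero (hA : (A.deleteRowCol w).det ≠ 0) {u v : V → R}
    (hu : A *ᵥ u = 0) (hv : A *ᵥ v = 0) : u w • v = v w • u :=
  sub_eq_zero.1 <| eq_zero_of_mulVec_eq_zero_of_apply_eq_zero hA
    (by simp [mulVec_sub, mulVec_smul, hu, hv])
    (by simp [mul_comm])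

end Kernel

lemma adjugate_apply_self_eq_det_deleteRowCol [DecidableEq V] [CommRing R] (A : Matrix V V R)
    (w : V) : A.adjugate w w = (A.deleteRowCol w).det := by
  -- after replacing row `w` by the basis vector `e_w`, the matrix is block triangular
  rw [adjugate_apply, twoBlockTriangular_det _ (· ≠ w)]
  · have hkeep : (A.updateRow w (Pi.single w 1)).toSquareBlockProp (· ≠ w) = A.deleteRowCol w := by
      ext i j
      simp [toSquareBlockProp, toBlock_apply, updateRow_ne i.2]
    have hpivot : (A.updateRow w (Pi.single w 1)).toSquareBlockProp (¬· ≠ w) = 1 := by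
      ext ⟨i, hi⟩ ⟨j, hj⟩
      simp only [not_not] at hi hj
      subst hi hj
      simp [toSquareBlockProp, toBlock_apply]
    rw [hkeep, hpivot, det_one, mul_one]
  · intro i hi j hj
    simp only [not_not] at hi
    simp [hi, hj]

section ZeroRowSums

variable [DecidableEq V] [CommRing R] [IsDomain R] {A : Matrix V V R}

lemma det_eq_zero_of_mulVec_one_eq_zero [Nonempty V] (h1 : A *ᵥ 1 = 0) : A.det = 0 :=
  exists_mulVec_eq_zero_iff.1 ⟨1, one_ne_zero, h1⟩

lemma adjugate_apply_eq_adjugate_apply_self (h1 : A *ᵥ 1 = 0) {y : V}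
    (hy : (A.deleteRowCol y).det ≠ 0) (x : V) : A.adjugate x y = A.adjugate y y := by
  have : Nonempty V := ⟨x⟩
  have hdet := det_eq_zero_of_mulVec_one_eq_zero h1
  have hcol : A *ᵥ (A.adjugate *ᵥ Pi.single y 1) = 0 := by
    rw [mulVec_mulVec, mul_adjugate, hdet, zero_smul, zero_mulVec]
  have := congrFun (smul_eq_smul_of_mulVec_eq_zero hy h1 hcol) x
  simpa [mulVec_single_one] using this

lemma smul_diag_adjugate_eq_of_vecMul_eq_zero (h1 : A *ᵥ 1 = 0)
    (hA : ∀ y, (A.deleteRowCol y).det ≠ 0) {ρ : V → R} (hρ : ρ ᵥ* A = 0) (w : V) :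
    ρ w • A.adjugate.diag = A.adjugate w w • ρ := by
  have hdiag : A.adjugate.diag ᵥ* A = 0 := by
    funext y
    have : Nonempty V := ⟨y⟩
    have hdet := det_eq_zero_of_mulVec_one_eq_zero h1
    have hrow : A.adjugate.diag = A.adjugate y := funext fun x =>
      (adjugate_apply_eq_adjugate_apply_self h1 (hA x) y).symm
    rw [hrow, ← mul_apply_eq_vecMul, adjugate_mul, hdet, zero_smul]
    rfl
  have hAT : (Aᵀ.deleteRowCol w).det ≠ 0 := (det_transpose (A.deleteRowCol w)).trans_ne (hA w)
  exact smul_eq_smul_of_mulVec_eq_zero hAT (by rwa [mulVec_transpose])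
    (by rwa [mulVec_transpose])

end ZeroRowSums

section Stochastic

variable [CommRing R] [LinearOrder R] [IsStrictOrderedRing R] {M : Matrix V V R}

lemma abs_apply_eq_of_forall_abs_le (hM : ∀ x y, 0 ≤ M x y) (hMstoch : ∀ x, ∑ y, M x y = 1)
    {u : V → R} {x : V} (hx : (M *ᵥ u) x = u x) (hmax : ∀ y, |u y| ≤ |u x|) {z : V}
    (hz : 0 < M x z) : |u z| = |u x| := by
  have hle : ∀ y ∈ univ, M x y * |u y| ≤ M x y * |u x| :=
    fun y _ => mul_le_mul_of_nonneg_left (hmax y) (hM x y)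
  have hge : ∑ y, M x y * |u x| ≤ ∑ y, M x y * |u y| := calc
    ∑ y, M x y * |u x| = |u x| := by rw [← sum_mul, hMstoch, one_mul]
    _ = |∑ y, M x y * u y| := by rw [← hx]; rfl
    _ ≤ ∑ y, |M x y * u y| := abs_sum_le_sum_abs _ _
    _ = ∑ y, M x y * |u y| := by simp_rw [abs_mul, abs_of_nonneg (hM x _)]
  have heq := (sum_eq_sum_iff_of_le hle).1 (le_antisymm (sum_le_sum hle) hge)
  exact mul_left_cancel₀ hz.ne' (heq z (mem_univ z))

variable [DecidableEq V]

lemma mem_of_pow_apply_pos (hM : ∀ x y, 0 ≤ M x y) {S : Set V}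
    (hS : ∀ x ∈ S, ∀ z, 0 < M x z → z ∈ S) {n : ℕ} {x z : V} (hx : x ∈ S)
    (hxz : 0 < (M ^ n) x z) : z ∈ S := by
  induction n generalizing z with
  | zero =>
    obtain rfl : x = z := by
      by_contra h
      simp [one_apply_ne h] at hxz
    exact hx
  | succ n ih =>
    rw [pow_succ, mul_apply] at hxz
    obtain ⟨y, -, hy⟩ := (sum_pos_iff_of_nonneg fun y _ =>
      mul_nonneg (pow_apply_nonneg hM n x y) (hM y z)).1 hxz
    exact hS y (ih (pos_of_mul_pos_left hy (hM y z))) z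
      (pos_of_mul_pos_right hy (pow_apply_nonneg hM n x y))

lemma eq_zero_of_mulVec_apply_eq_of_apply_eq_zero (hM : ∀ x y, 0 ≤ M x y)
    (hMstoch : ∀ x, ∑ y, M x y = 1) (hirr : ∀ x y, ∃ n : ℕ, 0 < (M ^ n) x y) {u : V → R}
    {w : V} (hw : u w = 0) (hu : ∀ x ≠ w, (M *ᵥ u) x = u x) : u = 0 := by
  have : Nonempty V := ⟨w⟩
  obtain ⟨x₀, hx₀⟩ := Finite.exists_max fun x => |u x|
  suffices h : |u x₀| = 0 from funext fun x => abs_nonpos_iff.1 (h ▸ hx₀ x)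
  by_contra hne
  let S : Set V := {x | |u x| = |u x₀|}
  have hwS : w ∉ S := fun h => hne (h.symm.trans (by simp [hw]))
  have hS : ∀ x ∈ S, ∀ z, 0 < M x z → z ∈ S := fun x hx z hz =>
    (abs_apply_eq_of_forall_abs_le hM hMstoch (hu x (ne_of_mem_of_not_mem hx hwS))
      (fun y => (hx₀ y).trans_eq hx.symm) hz).trans hx
  obtain ⟨n, hn⟩ := hirr x₀ w
  exact hwS (mem_of_pow_apply_pos hM hS rfl hn)

lemma det_deleteRowCol_one_sub_ne_zero (hM : ∀ x y, 0 ≤ M x y)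
    (hMstoch : ∀ x, ∑ y, M x y = 1) (hirr : ∀ x y, ∃ n : ℕ, 0 < (M ^ n) x y) (w : V) :
    ((1 - M).deleteRowCol w).det ≠ 0 := by
  intro hdet
  obtain ⟨v, hv0, hv⟩ := exists_mulVec_eq_zero_iff.2 hdet
  let u : V → R := fun x => if h : x = w then 0 else v ⟨x, h⟩
  have hvu : v = fun i : {x // x ≠ w} => u i := funext fun i => by simp [u, i.2]
  have hw : u w = 0 := dif_pos rfl
  have harm : ∀ x ≠ w, (M *ᵥ u) x = u x := fun x hx => by
    have := congrFun (deleteRowCol_mulVec (1 - M) hw) ⟨x, hx⟩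
    rw [← hvu, hv] at this
    rw [sub_mulVec, one_mulVec, Pi.sub_apply, Pi.zero_apply, eq_comm, sub_eq_zero] at this
    exact this.symm
  exact hv0 (by rw [hvu, eq_zero_of_mulVec_apply_eq_of_apply_eq_zero hM hMstoch hirr hw harm]; rfl)

end Stochastic

end Matrix

open Matrix

lemma idSubKernelDeleted_eq {V : Type*} [Fintype V] [DecidableEq V] (M : Matrix V V ℝ) (w : V) :
    idSubKernelDeleted M w = (1 - M).deleteRowCol w := by
  ext i j
  simp [idSubKernelDeleted, one_apply, Subtype.ext_iff]

theorem invariant_distribution_eq_det_ratio_general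
    {V : Type*} [Fintype V] [DecidableEq V]
    (M : Matrix V V ℝ)
    (hMnonneg : ∀ x y, 0 ≤ M x y)
    (hMstoch : ∀ x, ∑ y, M x y = 1)
    (hirr : ∀ x y : V, ∃ n : ℕ, 0 < (M ^ n) x y)
    (ρ : V → ℝ)
    (hρsum : ∑ v, ρ v = 1)
    (hρinv : ∀ y, ∑ x, ρ x * M x y = ρ y)
    (w : V) :
    ρ w = (idSubKernelDeleted M w).det / ∑ x, (idSubKernelDeleted M x).det := by
  have hminor : ∀ x, (idSubKernelDeleted M x).det = (1 - M).adjugate.diag x := fun x => by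
    rw [diag_apply, adjugate_apply_self_eq_det_deleteRowCol, idSubKernelDeleted_eq]
  have hA := det_deleteRowCol_one_sub_ne_zero hMnonneg hMstoch hirr
  have h1 : (1 - M) *ᵥ 1 = 0 := by
    ext x
    simp [mulVec, dotProduct, one_apply, hMstoch]
  have hρ : ρ ᵥ* (1 - M) = 0 := by
    ext y
    simp [vecMul, dotProduct, one_apply, mul_sub, sum_sub_distrib, hρinv]
  have key := congrArg (fun f => ∑ x, f x) (smul_diag_adjugate_eq_of_vecMul_eq_zero h1 hA hρ w)
  simp only [Pi.smul_apply, smul_eq_mul, ← mul_sum, hρsum, mul_one] at key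
  have hsum : ∑ x, (1 - M).adjugate.diag x ≠ 0 := fun h =>
    hA w (by rw [← adjugate_apply_self_eq_det_deleteRowCol, ← key, h, mul_zero])
  simp_rw [hminor]
  rw [eq_div_iff hsum]
  exact key

/-- For an irreducible stochastic matrix `M` with invariant
probability distribution `ρ`, one has
`ρ w = det(Id − M⁽ʷ⁾) / ∑_x det(Id − M⁽ˣ⁾)` for every vertex `w`. -/
theorem invariant_distribution_eq_det_ratio
    {V : Type*} [Fintype V] [DecidableEq V] [Nonempty V]
    (M : Matrix V V ℝ)
    (hMnonneg : ∀ x y, 0 ≤ M x y)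
    (hMstoch : ∀ x, ∑ y, M x y = 1)
    (hirr : ∀ x y : V, ∃ n : ℕ, 0 < (M ^ n) x y)
    (ρ : V → ℝ)
    (hρnonneg : ∀ v, 0 ≤ ρ v)
    (hρsum : ∑ v, ρ v = 1)
    (hρinv : ∀ y, ∑ x, ρ x * M x y = ρ y)
    (w : V) :
    ρ w = (idSubKernelDeleted M w).det / ∑ x, (idSubKernelDeleted M x).det :=
  invariant_distribution_eq_det_ratio_general M hMnonneg hMstoch hirr ρ hρsum hρinv w
end

section
/- Let G be a finite connected graph on vertex set V, M an irreducible stochastic matrix positive on G, ρ its invariant distribution, and ←M the time-reversed kernel. Then for every fixed root r ∈ V, ∑_{(t,r) spanning trees of G rooted at r} ∏_{e ∈ E(t,r)} M_e = ∑_{(t,r) spanning trees of G rooted at r} ∏_{e ∈ E(t,r)} ←M_e. -/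
/-!
Both sides are the determinant of the Laplacian with the row and column of `r` removed
(matrix-tree theorem). Expanding that determinant multilinearly along the rows leaves, for each
parent map `p`, the determinant of `1 - P` with `P` the 0/1 matrix of `p`: it is `1` when every
vertex reaches `r` (the matrix is triangular for the distance to `r`) and `0` otherwise (the
indicator of the vertices that never reach `r` is a kernel vector). As `ρ` is invariant and `M`
stochastic, `←M` is stochastic too and its Laplacian is `D⁻¹ Lᵀ D` with `D = diag ρ`, so the
reduced determinants agree.
-/

open scoped Classical

/-- A rooted spanning tree of `G` with root `r`, encoded by its parent map. -/
def IsRootedSpanningTree {V : Type*} (G : SimpleGraph V) (p : V → V) (r : V) : Prop :=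
  p r = r ∧ (∀ u, u ≠ r → G.Adj u (p u)) ∧ (∀ u, ∃ n : ℕ, p^[n] u = r)

open Matrix Finset Function

namespace Matrix

variable {n R : Type*} [Fintype n] [DecidableEq n] [CommRing R]

theorem det_of_sum_smul_rows {ι : Type*} [Fintype ι] (c : n → ι → R) (B : n → ι → n → R) :
    (of fun i => ∑ k, c i k • B i k).det =
      ∑ q : n → ι, (∏ i, c i (q i)) * (of fun i => B i (q i)).det := by
  have := (detRowAlternating (R := R) (n := n)).toMultilinearMap.map_sum fun i k => c i k • B i k
  simp only [MultilinearMap.map_smul_univ, smul_eq_mul] at this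
  exact this

theorem det_eq_prod_diag_of_offDiag_lt {A : Matrix n n R} (φ : n → ℕ)
    (h : ∀ i j, i ≠ j → A i j ≠ 0 → φ j < φ i) : A.det = ∏ i, A i i := by
  rw [det_apply, Finset.sum_eq_single 1 (fun σ _ hσ => ?_) (by simp)]
  · simp
  obtain ⟨i, hi⟩ : ∃ i, σ i ≠ i := by
    by_contra! hfix
    exact hσ (Equiv.ext hfix)
  suffices ∃ j, A (σ j) j = 0 by
    obtain ⟨j, hj⟩ := this
    exact smul_eq_zero_of_right _ (Finset.prod_eq_zero (Finset.mem_univ j) hj)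
  by_contra! hne
  -- `φ` would strictly increase along `σ` somewhere and never decrease, yet `∑ φ ∘ σ = ∑ φ`.
  have hle : ∀ j, φ j ≤ φ (σ j) := fun j => by
    by_cases hj : σ j = j
    · rw [hj]
    · exact (h _ _ hj (hne j)).le
  have := Finset.sum_lt_sum (fun j _ => hle j) ⟨i, Finset.mem_univ i, h _ _ hi (hne i)⟩
  rw [Equiv.sum_comp σ φ] at this
  exact lt_irrefl _ this

theorem det_eq_zero_of_sum_cols_eq_zero {A : Matrix n n R} {s : Finset n} (hs : s.Nonempty)
    (h : ∀ i, ∑ j ∈ s, A i j = 0) : A.det = 0 := by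
  obtain ⟨j, hj⟩ := hs
  have := det_updateCol_sum A j fun k => if k ∈ s then 1 else 0
  simp only [ite_smul, one_smul, zero_smul, Finset.sum_ite_mem, Finset.univ_inter, h,
    if_pos hj] at this
  rw [← this]
  exact det_eq_zero_of_column_eq_zero j fun i => by simp

theorem det_eq_of_apply_eq_mul_apply_div {K : Type*} [Field K] {A B : Matrix n n K}
    {ρ : n → K} (hρ : ∀ i, ρ i ≠ 0) (h : ∀ i j, B i j = ρ j * A j i / ρ i) :
    B.det = A.det := by
  have hB : B = diagonal ρ⁻¹ * Aᵀ * diagonal ρ := by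
    ext i j
    rw [mul_diagonal, diagonal_mul, h, transpose_apply, Pi.inv_apply]
    field_simp
  rw [hB, det_mul, det_mul, det_diagonal, det_diagonal, det_transpose, mul_right_comm,
    ← Finset.prod_mul_distrib]
  simp [hρ]

end Matrix

theorem sum_fun_subtype_ne_eq {V α M : Type*} [Fintype V] [DecidableEq V] [Fintype α]
    [AddCommMonoid M] (r : V) (a : α) (F : ({x // x ≠ r} → α) → M) :
    ∑ q, F q = ∑ p : V → α, if p r = a then F (fun u => p u) else 0 := by
  rw [← Finset.sum_filter]
  refine Finset.sum_nbij' (fun q v => if h : v = r then a else q ⟨v, h⟩) (fun p u => p u)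
    (by simp) (by simp) (fun q _ => ?_) (fun p hp => ?_) (fun q _ => ?_)
  · ext u
    simp [u.2]
  · ext v
    by_cases h : v = r
    · subst h
      simpa using (Finset.mem_filter.mp hp).2.symm
    · simp [h]
  · congr
    ext u
    simp [u.2]

section MatrixTree

variable {V R : Type*}

theorem exists_iterate_apply_eq_iff_of_isFixedPt {p : V → V} {r : V} (hpr : p r = r) {u : V} :
    (∃ n : ℕ, p^[n] (p u) = r) ↔ ∃ n : ℕ, p^[n] u = r := by
  constructor
  · rintro ⟨n, hn⟩
    exact ⟨n + 1, by rwa [iterate_succ_apply]⟩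
  · rintro ⟨n, hn⟩
    exact ⟨n, by rw [← iterate_succ_apply, iterate_succ_apply', hn, hpr]⟩

def IsRootedTree (p : V → V) (r : V) : Prop :=
  p r = r ∧ ∀ u, ∃ n : ℕ, p^[n] u = r

theorem isRootedSpanningTree_iff (G : SimpleGraph V) (p : V → V) (r : V) :
    IsRootedSpanningTree G p r ↔ IsRootedTree p r ∧ ∀ u, u ≠ r → G.Adj u (p u) := by
  unfold IsRootedSpanningTree IsRootedTree
  tauto

variable [Fintype V] [DecidableEq V]

theorem sum_isRootedSpanningTree_eq_sum_isRootedTree [CommSemiring R] (G : SimpleGraph V)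
    {w : Matrix V V R} (hw : ∀ x y, ¬ G.Adj x y → w x y = 0) (r : V) :
    (∑ p : V → V, if IsRootedSpanningTree G p r then ∏ u ∈ univ.erase r, w u (p u) else 0) =
      ∑ p : V → V, if IsRootedTree p r then ∏ u ∈ univ.erase r, w u (p u) else 0 := by
  refine Finset.sum_congr rfl fun p _ => ?_
  by_cases hadj : ∀ u, u ≠ r → G.Adj u (p u)
  · simp only [isRootedSpanningTree_iff, and_iff_left hadj]
  · push Not at hadj
    obtain ⟨u, hur, hnadj⟩ := hadj
    have hzero : ∏ u ∈ univ.erase r, w u (p u) = 0 :=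
      Finset.prod_eq_zero (Finset.mem_erase.mpr ⟨hur, Finset.mem_univ u⟩) (hw u (p u) hnadj)
    simp [hzero]

variable [CommRing R]

def parentMatrix (p : V → V) : Matrix V V R :=
  of fun u v => if p u = v then 1 else 0

theorem det_one_sub_parentMatrix_of_reaches {p : V → V} {r : V}
    (h : ∀ u, ∃ n : ℕ, p^[n] u = r) :
    (1 - (parentMatrix p).submatrix ((↑) : {x // x ≠ r} → V) (↑) : Matrix _ _ R).det = 1 := by
  have depth_lt : ∀ u : {x // x ≠ r}, Nat.find (h (p u)) < Nat.find (h u) := by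
    intro u
    have hpos : Nat.find (h u) ≠ 0 := fun h0 => u.2 (by simpa [h0] using Nat.find_spec (h u))
    refine lt_of_le_of_lt (Nat.find_min' _ ?_) (Nat.pred_lt hpos)
    rw [← iterate_succ_apply, Nat.succ_pred hpos, Nat.find_spec (h u)]
  rw [det_eq_prod_diag_of_offDiag_lt (n := {x // x ≠ r}) fun u => Nat.find (h u)]
  · refine Finset.prod_eq_one fun u _ => ?_
    have : p u ≠ u := fun hu => (depth_lt u).ne (by rw [hu])
    simp [parentMatrix, this]
  · intro u v huv hne
    have : p u = v := by
      by_contra hpv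
      simp [parentMatrix, huv, hpv] at hne
    simpa [← this] using depth_lt u

theorem det_one_sub_parentMatrix_of_not_reaches {p : V → V} {r : V} (hpr : p r = r)
    (h : ¬ ∀ u, ∃ n : ℕ, p^[n] u = r) :
    (1 - (parentMatrix p).submatrix ((↑) : {x // x ≠ r} → V) (↑) : Matrix _ _ R).det = 0 := by
  push Not at h
  obtain ⟨u₀, hu₀⟩ := h
  refine det_eq_zero_of_sum_cols_eq_zero
    (s := univ.filter fun v : {x // x ≠ r} => ¬ ∃ n, p^[n] v = r)
    ⟨⟨u₀, hu₀ 0⟩, by simpa using hu₀⟩ fun u => ?_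
  simp only [Matrix.sub_apply, one_apply, submatrix_apply, parentMatrix, of_apply,
    Finset.sum_sub_distrib, Finset.sum_ite_eq, Finset.mem_filter, Finset.mem_univ, true_and]
  by_cases hu : p u = r
  · have hreach : ∃ n, p^[n] u = r := ⟨1, hu⟩
    rw [Finset.sum_eq_zero fun x _ => if_neg fun h => x.2 (h ▸ hu)]
    simp [hreach]
  · have hsingle : (fun x : {x // x ≠ r} => if p u = x then (1 : R) else 0) =
        fun x => if ⟨p u, hu⟩ = x then 1 else 0 := by
      ext x
      simp [Subtype.ext_iff]
    simp only [hsingle, Finset.sum_ite_eq, Finset.mem_filter, Finset.mem_univ, true_and,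
      exists_iterate_apply_eq_iff_of_isFixedPt hpr, sub_self]

def laplacian (w : Matrix V V R) : Matrix V V R :=
  diagonal (fun u => ∑ v, w u v) - w

theorem det_laplacian_submatrix_eq_sum_isRootedTree (w : Matrix V V R) (r : V) :
    ((laplacian w).submatrix ((↑) : {x // x ≠ r} → V) (↑)).det =
      ∑ p : V → V, if IsRootedTree p r then ∏ u ∈ univ.erase r, w u (p u) else 0 := by
  have hrows : (laplacian w).submatrix ((↑) : {x // x ≠ r} → V) (↑) =
      of fun u : {x // x ≠ r} => ∑ y, w u y • fun v : {x // x ≠ r} =>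
        (if u = v then (1 : R) else 0) - if y = v then 1 else 0 := by
    ext u v
    simp [laplacian, diagonal_apply, Subtype.ext_iff, mul_sub, Finset.sum_sub_distrib]
  rw [hrows, det_of_sum_smul_rows, sum_fun_subtype_ne_eq r r]
  refine Finset.sum_congr rfl fun p _ => ?_
  have hrows_p : (of fun u : {x // x ≠ r} => fun v : {x // x ≠ r} =>
      (if u = v then (1 : R) else 0) - if p u = v then 1 else 0) =
      1 - (parentMatrix p).submatrix (↑) (↑) := by
    ext u v
    simp [parentMatrix, one_apply]
  have hprod : ∏ u : {x // x ≠ r}, w u (p u) = ∏ u ∈ univ.erase r, w u (p u) :=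
    (Finset.prod_subtype _ (by simp) fun u => w u (p u)).symm
  rw [hrows_p, hprod]
  by_cases hpr : p r = r
  · by_cases hreach : ∀ u, ∃ n : ℕ, p^[n] u = r
    · rw [det_one_sub_parentMatrix_of_reaches hreach, if_pos hpr, if_pos ⟨hpr, hreach⟩,
        mul_one]
    · rw [det_one_sub_parentMatrix_of_not_reaches hpr hreach, if_pos hpr,
        if_neg fun h => hreach h.2, mul_zero]
  · rw [if_neg hpr, if_neg fun h => hpr h.1]

theorem laplacian_apply_eq_of_reversal {K : Type*} [Field K]
    {w w' : Matrix V V K} {ρ : V → K} (hρ : ∀ v, ρ v ≠ 0)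
    (hrev : ∀ x y, w' x y = ρ y * w y x / ρ x) (hsum : ∀ x, ∑ y, w' x y = ∑ y, w x y)
    (u v : V) : laplacian w' u v = ρ v * laplacian w v u / ρ u := by
  by_cases huv : u = v
  · subst huv
    simp only [laplacian, Matrix.sub_apply, diagonal_apply_eq]
    rw [hsum, hrev u u, mul_div_cancel_left₀ _ (hρ u), mul_div_cancel_left₀ _ (hρ u)]
  · simp only [laplacian, hrev, Matrix.sub_apply, diagonal_apply_ne _ huv,
      diagonal_apply_ne _ (Ne.symm huv), zero_sub, mul_neg, neg_div]

end MatrixTree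

theorem tree_weight_sums_eq_for_reversed_kernel_general
    {V : Type*} [Fintype V] [DecidableEq V]
    (G : SimpleGraph V)
    (M : Matrix V V ℝ)
    (hMnonneg : ∀ x y, 0 ≤ M x y)
    (hMstoch : ∀ x, ∑ y, M x y = 1)
    (hpos : ∀ x y, 0 < M x y ↔ G.Adj x y)
    (ρ : V → ℝ)
    (hρpos : ∀ v, 0 < ρ v)
    (hρinv : ∀ y, ∑ x, ρ x * M x y = ρ y)
    (revM : Matrix V V ℝ)
    (hrev : ∀ x y, revM x y = ρ y * M y x / ρ x)
    (r : V) :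
    (∑ p : V → V, if IsRootedSpanningTree G p r
        then ∏ u ∈ Finset.univ.erase r, M u (p u) else 0) =
      ∑ p : V → V, if IsRootedSpanningTree G p r
        then ∏ u ∈ Finset.univ.erase r, revM u (p u) else 0 := by
  have hρ : ∀ v, ρ v ≠ 0 := fun v => (hρpos v).ne'
  have hM : ∀ x y, ¬ G.Adj x y → M x y = 0 := fun x y h =>
    le_antisymm (not_lt.mp fun hlt => h ((hpos x y).mp hlt)) (hMnonneg x y)
  have hrevM : ∀ x y, ¬ G.Adj x y → revM x y = 0 := fun x y h => by
    rw [hrev, hM y x fun hyx => h hyx.symm, mul_zero, zero_div]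
  have hsum : ∀ x, ∑ y, revM x y = ∑ y, M x y := fun x => by
    simp_rw [hrev, ← Finset.sum_div, hρinv, div_self (hρ x), hMstoch]
  rw [sum_isRootedSpanningTree_eq_sum_isRootedTree G hM,
    sum_isRootedSpanningTree_eq_sum_isRootedTree G hrevM,
    ← det_laplacian_submatrix_eq_sum_isRootedTree, ← det_laplacian_submatrix_eq_sum_isRootedTree]
  exact (det_eq_of_apply_eq_mul_apply_div (ρ := fun u : {x // x ≠ r} => ρ u) (fun u => hρ u)
    fun u v => laplacian_apply_eq_of_reversal hρ hrev hsum u v).symm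

/-- For an irreducible stochastic kernel `M` positive on a finite
connected graph `G`, with invariant distribution `ρ` and reversed kernel `←M`,
the total tree weights for `M` and `←M` rooted at any fixed `r` coincide. -/
theorem tree_weight_sums_eq_for_reversed_kernel
    {V : Type*} [Fintype V] [DecidableEq V] [Nonempty V]
    (G : SimpleGraph V) (hconn : G.Connected)
    (M : Matrix V V ℝ)
    (hMnonneg : ∀ x y, 0 ≤ M x y)
    (hMstoch : ∀ x, ∑ y, M x y = 1)
    (hpos : ∀ x y, 0 < M x y ↔ G.Adj x y)
    (ρ : V → ℝ)
    (hρpos : ∀ v, 0 < ρ v)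
    (hρsum : ∑ v, ρ v = 1)
    (hρinv : ∀ y, ∑ x, ρ x * M x y = ρ y)
    (revM : Matrix V V ℝ)
    (hrev : ∀ x y, revM x y = ρ y * M y x / ρ x)
    (r : V) :
    (∑ p : V → V, if IsRootedSpanningTree G p r
        then ∏ u ∈ Finset.univ.erase r, M u (p u) else 0) =
      ∑ p : V → V, if IsRootedSpanningTree G p r
        then ∏ u ∈ Finset.univ.erase r, revM u (p u) else 0 :=
  tree_weight_sums_eq_for_reversed_kernel_general G M hMnonneg hMstoch hpos ρ hρpos hρinv revM hrev
    r
end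

section
/- For a fixed vertex r of a finite set V and a matrix M, the signed sum over all collections C of pairwise vertex-disjoint directed cycles (of length ≥ 1) on V \ {r} of (−1)^{N(C)} ∏_{cycles c of C} ∏_{edges e of c} M_e equals det(Id − M^{(r)}), where N(C) is the number of cycles in C and M^{(r)} is M with row and column r deleted. -/
/-!
Expand `det (1 - N)` by the Leibniz formula. For a fixed permutation `π`, each factor
`(1 - N) i (π i)` is `[π i = i] - N i (π i)`; multiplying out and choosing the `-N` term
exactly on a set `A` leaves the indicator that `π` fixes everything outside `A`, so the
summand is `sign π (-1)^#A ∏_{x ∈ A} N x (π x)`. Such an `A` is the support of `π` together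
with some fixed points (the loops), and `sign π = (-1)^(#support + #cycles)`, so the sign
becomes `(-1)^(#cycles + #loops)`.
-/

open Finset

namespace Equiv.Perm

variable {α : Type*} [Fintype α] [DecidableEq α]

theorem sign_eq_neg_one_pow_card_support_add_card_cycleFactorsFinset {R : Type*} [Ring R]
    (π : Perm α) :
    ((sign π : ℤ) : R) = (-1) ^ (#π.support + #π.cycleFactorsFinset) := by
  rw [sign_of_cycleType, sum_cycleType, cycleType_def, Multiset.card_map]
  push_cast
  rfl

theorem card_eq_card_support_add_card_filter_fixed {π : Perm α} {A : Finset α}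
    (hA : ∀ x ∉ A, π x = x) :
    #A = #π.support + #{x ∈ A | π x = x} := by
  have hsupport : {x ∈ A | ¬π x = x} = π.support := by
    ext x
    simp only [mem_filter, mem_support]
    exact ⟨And.right, fun hx => ⟨by_contra fun hxA => hx (hA x hxA), hx⟩⟩
  rw [← card_filter_add_card_filter_not (s := A) (fun x => π x = x), hsupport, add_comm]

end Equiv.Perm

namespace Matrix

variable {α R : Type*} [Fintype α] [DecidableEq α] [CommRing R]

theorem prod_one_sub_apply_perm (N : Matrix α α R) (π : Equiv.Perm α) :
    ∏ i, (1 - N) i (π i) =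
      ∑ A : Finset α, if ∀ x ∉ A, π x = x then (-1) ^ #A * ∏ x ∈ A, N x (π x) else 0 := by
  have hfactor : ∀ i, (1 - N) i (π i) = -N i (π i) + if π i = i then 1 else 0 := fun i => by
    rw [sub_apply, one_apply, neg_add_eq_sub]
    simp only [eq_comm]
  simp_rw [hfactor, Fintype.prod_add, prod_boole, mem_compl, prod_neg, mul_ite, mul_one, mul_zero]

theorem det_one_sub_eq_sum_disjoint_cycles (N : Matrix α α R) :
    (1 - N).det =
      ∑ A : Finset α, ∑ π : Equiv.Perm α,
        if ∀ x ∉ A, π x = x then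
          (-1) ^ (#π.cycleFactorsFinset + #{x ∈ A | π x = x}) * ∏ x ∈ A, N x (π x)
        else 0 := by
  rw [← det_transpose, det_apply', sum_comm]
  refine sum_congr rfl fun π _ => ?_
  simp only [transpose_apply]
  rw [prod_one_sub_apply_perm, mul_sum]
  refine sum_congr rfl fun A _ => ?_
  split_ifs with hA
  · rw [Equiv.Perm.sign_eq_neg_one_pow_card_support_add_card_cycleFactorsFinset,
      Equiv.Perm.card_eq_card_support_add_card_filter_fixed hA, ← mul_assoc, ← pow_add]
    congr 1
    rw [show #π.support + #π.cycleFactorsFinset + (#π.support + #{x ∈ A | π x = x}) =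
        #π.cycleFactorsFinset + #{x ∈ A | π x = x} + 2 * #π.support by ring,
      pow_add, pow_mul, neg_one_sq, one_pow, mul_one]
  · rw [mul_zero]

end Matrix

/-- The signed sum over collections of pairwise vertex-disjoint
directed cycles (length ≥ 1, loops allowed) on `V \ {r}` of
`(−1)^{#cycles} ∏ M`-weights equals `det(Id − M⁽ʳ⁾)`.

A collection of disjoint cycles on `V \ {r}` is encoded by its (finite) support
`A` together with a permutation `π` of `V \ {r}` fixing every point outside
`A`: the cycles of the collection are the cycles of `π` inside `A`, fixed
points of `π` belonging to `A` being loops (cycles of length 1).  The number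
of cycles is `π.cycleFactorsFinset.card` (cycles of length ≥ 2) plus the
number of fixed points of `π` inside `A` (loops). -/
theorem signed_cycle_sum_eq_det
    {V : Type*} [Fintype V] [DecidableEq V]
    (M : Matrix V V ℝ) (r : V) :
    ((1 : Matrix {v : V // v ≠ r} {v : V // v ≠ r} ℝ) -
        Matrix.of (fun i j : {v : V // v ≠ r} => M i.1 j.1)).det =
      ∑ A : Finset {v : V // v ≠ r}, ∑ π : Equiv.Perm {v : V // v ≠ r},
        if (∀ x ∉ A, π x = x) then
          (-1 : ℝ) ^ (π.cycleFactorsFinset.card + (A.filter fun x => π x = x).card) *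
            ∏ x ∈ A, M x.1 (π x).1
        else 0 :=
  Matrix.det_one_sub_eq_sum_disjoint_cycles _
end

section
/- Let w = (w_0, ..., w_m) be a covering path of a finite connected graph G (it visits all vertices and m = τ_{|V|} is the first time all vertices are visited). Then FirstEntranceTree(w), the directed graph on V with root w_0 and edges (w_{τ_k}, w_{τ_k − 1}) for 2 ≤ k ≤ |V| (where τ_k is the first time the path has visited k distinct vertices), is a spanning tree of G rooted at w_0 with all edges directed toward the root: every vertex u ≠ w_0 has exactly one outgoing edge and following outgoing edges from any vertex reaches w_0. -/
/-!
Every vertex `u ≠ w 0` is first entered at a time `τ_u > 0`, and the path steps into it from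
`w (τ_u - 1)`, which is therefore a neighbour of `u` first entered strictly before `τ_u`.
So the parent map strictly decreases the first-entrance time away from the root, and iterating
it from any vertex must end at `w 0`, the only vertex with `τ = 0`.
-/

theorem Function.exists_iterate_eq_of_measure_lt {α : Type*} (f : α → α) (μ : α → ℕ) (r : α)
    (hμ : ∀ u, u ≠ r → μ (f u) < μ u) (u : α) : ∃ n, f^[n] u = r := by
  induction hu : μ u using Nat.strong_induction_on generalizing u with
  | _ k ih =>
    by_cases hur : u = r
    · exact ⟨0, hur⟩
    · obtain ⟨n, hn⟩ := ih (μ (f u)) (hu ▸ hμ u hur) (f u) rfl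
      exact ⟨n + 1, hn⟩

section FirstVisit

variable {α : Type*} [DecidableEq α] (w : ℕ → α) (hex : ∀ v, ∃ j, w j = v)

def firstVisit (v : α) : ℕ := Nat.find (hex v)

variable {w hex}

theorem apply_firstVisit (v : α) : w (firstVisit w hex v) = v := Nat.find_spec (hex v)

theorem firstVisit_le {v : α} {j : ℕ} (h : w j = v) : firstVisit w hex v ≤ j := Nat.find_le h

theorem firstVisit_start : firstVisit w hex (w 0) = 0 := Nat.le_zero.mp (firstVisit_le rfl)

theorem firstVisit_pos {u : α} (hu : u ≠ w 0) : 0 < firstVisit w hex u :=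
  Nat.pos_of_ne_zero fun h => hu (h ▸ apply_firstVisit u).symm

theorem firstVisit_prev_lt {u : α} (hu : u ≠ w 0) :
    firstVisit w hex (w (firstVisit w hex u - 1)) < firstVisit w hex u :=
  (firstVisit_le rfl).trans_lt (Nat.sub_lt (firstVisit_pos hu) one_pos)

theorem SimpleGraph.adj_prev_firstVisit {G : SimpleGraph α} {m : ℕ}
    (hpath : ∀ j < m, G.Adj (w j) (w (j + 1))) {u : α} (hu : u ≠ w 0)
    (hum : firstVisit w hex u ≤ m) : G.Adj u (w (firstVisit w hex u - 1)) := by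
  have hpos : 0 < firstVisit w hex u := firstVisit_pos hu
  have hadj := hpath (firstVisit w hex u - 1) (by omega)
  rwa [Nat.sub_add_cancel hpos, apply_firstVisit (hex := hex), G.adj_comm] at hadj

end FirstVisit

theorem firstEntranceTree_is_rooted_spanning_tree_general
    {V : Type*} [DecidableEq V]
    (G : SimpleGraph V)
    (w : ℕ → V) (m : ℕ)
    (hpath : ∀ j < m, G.Adj (w j) (w (j + 1)))
    (hcov : ∀ v : V, ∃ j ≤ m, w j = v)
    (hex : ∀ v : V, ∃ j, w j = v) :
    IsRootedSpanningTree G (fun u => w (Nat.find (hex u) - 1)) (w 0) := by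
  refine ⟨?root, fun u hu => ?adj, ?reach⟩
  case root => exact congrArg (fun j => w (j - 1)) firstVisit_start
  case adj =>
    obtain ⟨j, hjm, hj⟩ := hcov u
    exact G.adj_prev_firstVisit hpath hu ((firstVisit_le hj).trans hjm)
  case reach =>
    exact Function.exists_iterate_eq_of_measure_lt _ (firstVisit w hex) (w 0)
      fun u hu => firstVisit_prev_lt hu

/-- For a covering path `w = (w 0, …, w m)` of a finite connected
graph `G` (it visits every vertex, and `m` is the first time this happens),
the first-entrance tree — which assigns to every vertex `u ≠ w 0` the parent
`w (τ_u − 1)`, where `τ_u` is the first time `w` visits `u` — is a spanning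
tree of `G` rooted at `w 0` with all edges directed toward the root: every
`u ≠ w 0` has exactly one outgoing edge, these edges are edges of `G`, and
following the parent map from any vertex reaches `w 0`. -/
theorem firstEntranceTree_is_rooted_spanning_tree
    {V : Type*} [Fintype V] [DecidableEq V] [Nonempty V]
    (G : SimpleGraph V) (hconn : G.Connected)
    (w : ℕ → V) (m : ℕ)
    (hpath : ∀ j < m, G.Adj (w j) (w (j + 1)))
    (hcov : ∀ v : V, ∃ j ≤ m, w j = v)
    (hmin : ∀ j < m, w m ≠ w j)
    (hex : ∀ v : V, ∃ j, w j = v) :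
    IsRootedSpanningTree G (fun u => w (Nat.find (hex u) - 1)) (w 0) :=
  firstEntranceTree_is_rooted_spanning_tree_general G w m hpath hcov hex
end

section
/- The map Heap from paths starting at r to collections of heaps, sending a path w = (w_0, ..., w_m) to the family (Heap_u(w))_{u ∈ V} where Heap_u(w) is the list of edges (w_{j+1}, w_j) for 0 ≤ j ≤ m−1 with w_{j+1} = u taken in path order, is injective: two distinct paths starting at r have distinct heap collections. -/
/-- The heap at vertex `u` of a path encoded as a list `l = [w_0, …, w_m]`:
the list of reversed steps `(w_{j+1}, w_j)` with `w_{j+1} = u`, in path order. -/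
def heapAt {V : Type*} [DecidableEq V] (u : V) (l : List V) : List (V × V) :=
  (l.tail.zip l).filter (fun e => e.1 = u)

/-!
Taken together, the heaps are a rearrangement of the reversed steps `(w_{j+1}, w_j)` of the path.
Their first components are `w_1, …, w_m` and their second components are `w_0, …, w_{m-1}`, so,
with `w_0 = r` fixed, the heaps determine the multisets `{w_0, …, w_m}` and `{w_0, …, w_{m-1}}`,
hence the endpoint `w_m`. The last step is the last entry of the heap at `w_m`; deleting it leaves
the heaps of `(w_0, …, w_{m-1})`, and induction on `m` finishes.
-/

open List

section

variable {V : Type*}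

def reverseSteps (l : List V) : List (V × V) :=
  l.tail.zip l

theorem heapAt_eq_filter_reverseSteps [DecidableEq V] (u : V) (l : List V) :
    heapAt u l = (reverseSteps l).filter (·.1 = u) :=
  rfl

theorem reverseSteps_eq_zip_dropLast : ∀ l : List V, reverseSteps l = l.tail.zip l.dropLast
  | [] | [_] => rfl
  | a :: b :: t => by
    simpa [reverseSteps] using reverseSteps_eq_zip_dropLast (b :: t)

theorem map_fst_reverseSteps (l : List V) : (reverseSteps l).map Prod.fst = l.tail :=
  map_fst_zip (by simp)

theorem map_snd_reverseSteps (l : List V) : (reverseSteps l).map Prod.snd = l.dropLast := by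
  rw [reverseSteps_eq_zip_dropLast]
  exact map_snd_zip (by simp)

theorem reverseSteps_append_singleton {l : List V} (hl : l ≠ []) (y : V) :
    reverseSteps (l ++ [y]) = reverseSteps l ++ [(y, l.getLast hl)] := by
  rw [reverseSteps_eq_zip_dropLast, reverseSteps_eq_zip_dropLast, tail_append_of_ne_nil hl,
    dropLast_concat]
  calc (l.tail ++ [y]).zip l = (l.tail ++ [y]).zip (l.dropLast ++ [l.getLast hl]) := by
        rw [dropLast_append_getLast]
    _ = _ := zip_append (by simp)

theorem perm_reverseSteps_of_heapAt_eq [DecidableEq V] {l₁ l₂ : List V}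
    (h : ∀ u, heapAt u l₁ = heapAt u l₂) : reverseSteps l₁ ~ reverseSteps l₂ := by
  refine perm_iff_count.2 fun e => ?_
  have he : decide (e.1 = e.1) = true := decide_eq_true rfl
  rw [← count_filter (p := fun x : V × V => decide (x.1 = e.1)) (l := reverseSteps l₁) he,
    ← count_filter (p := fun x : V × V => decide (x.1 = e.1)) (l := reverseSteps l₂) he]
  exact congrArg (count e) (h e.1)

theorem eq_of_perm_append_singleton {s₁ s₂ : List V} {y₁ y₂ : V}
    (hp : s₁ ++ [y₁] ~ s₂ ++ [y₂]) (hs : s₁ ~ s₂) : y₁ = y₂ :=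
  singleton_perm_singleton.1 <| (perm_append_left_iff s₂).1 <| (hs.append_right _).symm.trans hp

theorem perm_of_head?_eq_of_tail_perm {l₁ l₂ : List V} (hhead : l₁.head? = l₂.head?)
    (htail : l₁.tail ~ l₂.tail) : l₁ ~ l₂ := by
  match l₁, l₂, hhead with
  | [], [], _ => rfl
  | a :: _, _ :: _, hhead =>
    obtain rfl := Option.some_injective _ hhead
    exact htail.cons a

theorem heapAt_eq_of_heapAt_append_singleton_eq [DecidableEq V] {s₁ s₂ : List V} {y : V}
    (hs₁ : s₁ ≠ []) (hs₂ : s₂ ≠ []) (h : ∀ u, heapAt u (s₁ ++ [y]) = heapAt u (s₂ ++ [y]))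
    (u : V) : heapAt u s₁ = heapAt u s₂ := by
  have hu := h u
  simp only [heapAt_eq_filter_reverseSteps, reverseSteps_append_singleton hs₁,
    reverseSteps_append_singleton hs₂, filter_append] at hu
  exact (append_inj' hu (by by_cases hy : y = u <;> simp [hy])).1

theorem eq_of_head?_eq_of_heapAt_eq [DecidableEq V] {l₁ l₂ : List V}
    (hhead : l₁.head? = l₂.head?) (hheap : ∀ u, heapAt u l₁ = heapAt u l₂) : l₁ = l₂ := by
  induction l₁ using reverseRecOn generalizing l₂ with
  | nil => exact (head?_eq_none_iff.1 hhead.symm).symm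
  | append_singleton s₁ y₁ ih =>
    obtain rfl | ⟨s₂, y₂, rfl⟩ := eq_nil_or_concat' l₂
    · simp at hhead
    have hsteps := perm_reverseSteps_of_heapAt_eq hheap
    have hdrop : s₁ ~ s₂ := by
      simpa only [map_snd_reverseSteps, dropLast_concat] using hsteps.map Prod.snd
    have hperm : s₁ ++ [y₁] ~ s₂ ++ [y₂] := perm_of_head?_eq_of_tail_perm hhead
      (by simpa only [map_fst_reverseSteps] using hsteps.map Prod.fst)
    obtain rfl := eq_of_perm_append_singleton hperm hdrop
    obtain rfl | hs₁ := eq_or_ne s₁ []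
    · rw [eq_nil_of_length_eq_zero hdrop.length_eq.symm]
    have hs₂ : s₂ ≠ [] := ne_nil_of_length_pos (hdrop.length_eq ▸ length_pos_of_ne_nil hs₁)
    rw [head?_append_of_ne_nil _ hs₁, head?_append_of_ne_nil _ hs₂] at hhead
    rw [ih hhead (heapAt_eq_of_heapAt_append_singleton_eq hs₁ hs₂ hheap)]

end

theorem heap_injective_on_paths_general
    {V : Type*} [DecidableEq V]
    (r : V)
    (l₁ l₂ : List V)
    (h₁head : l₁.head? = some r) (h₂head : l₂.head? = some r)
    (hheap : ∀ u : V, heapAt u l₁ = heapAt u l₂) :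
    l₁ = l₂ :=
  eq_of_head?_eq_of_heapAt_eq (h₁head.trans h₂head.symm) hheap

/-- The map `Heap` from paths starting at `r` to collections of
heaps is injective: two paths starting at `r` with the same heap collection
are equal. -/
theorem heap_injective_on_paths
    {V : Type*} [Fintype V] [DecidableEq V]
    (G : SimpleGraph V) (r : V)
    (l₁ l₂ : List V)
    (h₁chain : List.Chain' G.Adj l₁) (h₂chain : List.Chain' G.Adj l₂)
    (h₁head : l₁.head? = some r) (h₂head : l₂.head? = some r)
    (hheap : ∀ u : V, heapAt u l₁ = heapAt u l₂) :
    l₁ = l₂ :=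
  heap_injective_on_paths_general r l₁ l₂ h₁head h₂head hheap
end

section
/- Stochastic golf sequence termination: let ←M be an irreducible Markov kernel on finite V, HoleSet ⊆ V with |HoleSet| ≥ N, and starting points S_1,...,S_N ∉ HoleSet. Run N successive Markov chains with kernel ←M, the j-th started at S_j and stopped at the first hitting time of HoleSet minus the final points of the previous j−1 chains. Then almost surely all N stopping times are finite, so the resulting random sequence of stopped paths is a golf sequence. Moreover if N = |HoleSet| − 1, then ∑_{f ∈ HoleSet} P(the hole f remains unoccupied) = 1. -/
/-- Golf sequence with respect to the positivity graph of a kernel `K`: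
the `j`-th path starts at `S j`, takes only steps of positive kernel weight,
its final points `F j` are distinct elements of `HoleSet`, and each path stops
exactly at the first time it hits a hole not occupied by a previous path. -/
def IsGolfSequenceKer {V : Type*} [DecidableEq V] (K : V → V → ℝ)
    (HoleSet : Finset V) {N : ℕ} (S : Fin N → V) (w : Fin N → List V) : Prop :=
  ∃ F : Fin N → V,
    Function.Injective F ∧
    (∀ j, w j ≠ [] ∧ List.Chain' (fun a b => 0 < K a b) (w j) ∧
      (w j).head? = some (S j) ∧
      (w j).getLast? = some (F j) ∧ F j ∈ HoleSet ∧
      (∀ v ∈ (w j).dropLast, v ∈ HoleSet → ∃ k, k < j ∧ F k = v))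

/-- The probability (product of transition probabilities) of a finite path. -/
def pathWeight {V : Type*} (K : V → V → ℝ) (l : List V) : ℝ :=
  ((l.zip l.tail).map (fun e => K e.1 e.2)).prod

/-! Work with path probabilities in `ℝ≥0∞`, where every sum over paths exists. Conditioning on
the first path, the weight of a golf sequence factors as the weight of a first-hit path of the
first ball times the weight of a golf sequence of the remaining `N - 1` balls with one hole
fewer, so by induction on `N` it suffices that a single chain hits a nonempty set `A` almost
surely. The probabilities of hitting `A` within `n` steps and of avoiding `A` for `n` steps add
up to `1`; by irreducibility the avoidance probability after some `m` steps is at most `c < 1`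
from every start, so by the Markov property it is at most `c ^ k` after `k * m` steps. Finally,
every golf sequence leaves exactly `|HoleSet| - N` holes free. -/

open scoped ENNReal

namespace StochasticGolf

variable {V : Type*}

section Paths

variable {K : V → V → ℝ} {A : Finset V} {x : V} {l : List V}

def IsFirstHitPath (K : V → V → ℝ) (A : Finset V) (x : V) (l : List V) : Prop :=
  l ≠ [] ∧ l.IsChain (fun a b => 0 < K a b) ∧ l.head? = some x ∧
    (∀ v ∈ l.dropLast, v ∉ A) ∧ ∃ a ∈ A, l.getLast? = some a

theorem IsFirstHitPath.head?_eq (h : IsFirstHitPath K A x l) : l.head? = some x := h.2.2.1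

theorem IsFirstHitPath.getLastD_mem (h : IsFirstHitPath K A x l) (d : V) : l.getLastD d ∈ A := by
  obtain ⟨-, -, -, -, a, ha, hl⟩ := h
  rwa [List.getLastD_eq_getLast?, hl]

theorem isFirstHitPath_iff_of_mem (hx : x ∈ A) : IsFirstHitPath K A x l ↔ l = [x] := by
  constructor
  · rintro ⟨hne, -, hhd, hdl, -⟩
    match l, hne with
    | [b], _ => simpa using hhd
    | b :: c :: r, _ =>
      obtain rfl : b = x := by simpa using hhd
      exact absurd hx (hdl b (by simp))
  · rintro rfl
    exact ⟨by simp, List.isChain_singleton _, rfl, by simp, x, hx, rfl⟩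

theorem isFirstHitPath_iff_of_notMem (hx : x ∉ A) :
    IsFirstHitPath K A x l ↔
      ∃ y t, l = x :: y :: t ∧ 0 < K x y ∧ IsFirstHitPath K A y (y :: t) := by
  constructor
  · rintro ⟨hne, hch, hhd, hdl, a, ha, hl⟩
    match l, hne with
    | [b], _ =>
      obtain ⟨rfl, rfl⟩ : b = x ∧ b = a := ⟨by simpa using hhd, by simpa using hl⟩
      exact absurd ha hx
    | b :: c :: r, _ =>
      obtain rfl : b = x := by simpa using hhd
      obtain ⟨hxc, hch⟩ := List.isChain_cons_cons.mp hch
      refine ⟨c, r, rfl, hxc, by simp, hch, rfl, fun v hv => hdl v ?_, a, ha, ?_⟩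
      · simp [hv]
      · rwa [List.getLast?_cons_cons] at hl
  · rintro ⟨y, t, rfl, hxy, -, hch, -, hdl, a, ha, hl⟩
    refine ⟨by simp, List.isChain_cons_cons.mpr ⟨hxy, hch⟩, rfl, ?_, a, ha, ?_⟩
    · simp only [List.dropLast_cons_cons, List.mem_cons, forall_eq_or_imp]
      exact ⟨hx, hdl⟩
    · rwa [List.getLast?_cons_cons]

theorem pathWeight_nonneg (hK : ∀ x y, 0 ≤ K x y) (l : List V) : 0 ≤ pathWeight K l :=
  List.prod_nonneg fun _ ha => by
    obtain ⟨e, -, rfl⟩ := List.mem_map.mp ha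
    exact hK _ _

theorem pathWeight_cons_cons (x y : V) (t : List V) :
    pathWeight K (x :: y :: t) = K x y * pathWeight K (y :: t) := by
  simp [pathWeight]

end Paths

section Weights

variable {K : V → V → ℝ}

noncomputable def pathProb (K : V → V → ℝ) (l : List V) : ℝ≥0∞ := ENNReal.ofReal (pathWeight K l)

noncomputable def seqProb (K : V → V → ℝ) {N : ℕ} (w : Fin N → List V) : ℝ≥0∞ :=
  ∏ j, pathProb K (w j)

theorem seqProb_cons {N : ℕ} (l : List V) (w : Fin N → List V) :
    seqProb K (Fin.cons l w : Fin (N + 1) → List V) = pathProb K l * seqProb K w := by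
  simp [seqProb, Fin.prod_univ_succ]

theorem seqProb_ne_top {N : ℕ} {w : Fin N → List V} : seqProb K w ≠ ∞ :=
  ENNReal.prod_ne_top fun _ _ => ENNReal.ofReal_ne_top

theorem tsum_prod_pathWeight_eq_toReal {N : ℕ} (hK : ∀ x y, 0 ≤ K x y)
    (P : (Fin N → List V) → Prop) :
    ∑' w : {w : Fin N → List V // P w}, ∏ j, pathWeight K (w.1 j) =
      (∑' w : {w : Fin N → List V // P w}, seqProb K w.1).toReal := by
  rw [ENNReal.tsum_toReal_eq fun _ => seqProb_ne_top]
  simp [seqProb, pathProb, ENNReal.toReal_ofReal (pathWeight_nonneg hK _)]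

end Weights

section Hitting

variable {K : V → V → ℝ} {A : Finset V}

/-- Probability that the chain started at `x` hits `A` within `n` steps (a path of length
`n + 1` makes `n` steps). -/
noncomputable def hitProbWithin (K : V → V → ℝ) (A : Finset V) (n : ℕ) (x : V) : ℝ≥0∞ :=
  ∑' l, {l | IsFirstHitPath K A x l ∧ l.length ≤ n + 1}.indicator (pathProb K) l

noncomputable def hitProb (K : V → V → ℝ) (A : Finset V) (x : V) : ℝ≥0∞ :=
  ∑' l, {l | IsFirstHitPath K A x l}.indicator (pathProb K) l

theorem hitProbWithin_of_mem {x : V} (hx : x ∈ A) (n : ℕ) : hitProbWithin K A n x = 1 := by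
  rw [hitProbWithin, tsum_eq_single [x], Set.indicator_of_mem]
  · simp [pathProb, pathWeight]
  · exact ⟨(isFirstHitPath_iff_of_mem hx).mpr rfl, by simp⟩
  · exact fun l hl =>
      Set.indicator_of_notMem (fun h => hl ((isFirstHitPath_iff_of_mem hx).mp h.1)) _

theorem hitProbWithin_zero_of_notMem {x : V} (hx : x ∉ A) : hitProbWithin K A 0 x = 0 :=
  ENNReal.tsum_eq_zero.mpr fun l => Set.indicator_of_notMem (by
    rintro ⟨h, hlen⟩
    obtain ⟨y, t, rfl, -⟩ := (isFirstHitPath_iff_of_notMem hx).mp h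
    simp at hlen) _

theorem hitProbWithin_le_hitProb (n : ℕ) (x : V) : hitProbWithin K A n x ≤ hitProb K A x :=
  ENNReal.tsum_le_tsum <| Set.indicator_le_indicator_of_subset (fun _ h => h.1) fun _ => zero_le

variable [Fintype V]

theorem indicator_cons_eq_sum (hK : ∀ x y, 0 ≤ K x y) {x : V} (hx : x ∉ A) (n : ℕ) (t : List V) :
    {l | IsFirstHitPath K A x l ∧ l.length ≤ n + 2}.indicator (pathProb K) (x :: t) =
      ∑ y, ENNReal.ofReal (K x y) *
        {l | IsFirstHitPath K A y l ∧ l.length ≤ n + 1}.indicator (pathProb K) t := by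
  rcases t with _ | ⟨y₀, r⟩
  · rw [Set.indicator_of_notMem, Finset.sum_eq_zero fun y _ => ?_]
    · rw [Set.indicator_of_notMem (fun h => h.1.1 rfl), mul_zero]
    · rintro ⟨h, -⟩
      obtain ⟨y, t, h, -⟩ := (isFirstHitPath_iff_of_notMem hx).mp h
      simp at h
  rw [Finset.sum_eq_single y₀ (fun y _ hy => ?_) (by simp)]
  swap
  · rw [Set.indicator_of_notMem (fun h => hy (by simpa using h.1.head?_eq.symm)), mul_zero]
  rcases (hK x y₀).eq_or_lt with hxy | hxy
  · rw [← hxy, ENNReal.ofReal_zero, zero_mul, Set.indicator_of_notMem]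
    rintro ⟨h, -⟩
    obtain ⟨y, t, heq, hpos, -⟩ := (isFirstHitPath_iff_of_notMem hx).mp h
    obtain ⟨rfl, rfl⟩ : y₀ = y ∧ r = t := by simpa using heq
    exact hpos.ne' hxy.symm
  · have hmem : (x :: y₀ :: r ∈ {l | IsFirstHitPath K A x l ∧ l.length ≤ n + 2}) ↔
        y₀ :: r ∈ {l | IsFirstHitPath K A y₀ l ∧ l.length ≤ n + 1} := by
      simp [isFirstHitPath_iff_of_notMem hx, hxy]
    by_cases h : y₀ :: r ∈ {l | IsFirstHitPath K A y₀ l ∧ l.length ≤ n + 1}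
    · rw [Set.indicator_of_mem h, Set.indicator_of_mem (hmem.mpr h), pathProb, pathProb,
        pathWeight_cons_cons, ENNReal.ofReal_mul (hK x y₀)]
    · rw [Set.indicator_of_notMem h, Set.indicator_of_notMem (mt hmem.mp h), mul_zero]

theorem hitProbWithin_succ_of_notMem (hK : ∀ x y, 0 ≤ K x y) {x : V} (hx : x ∉ A) (n : ℕ) :
    hitProbWithin K A (n + 1) x = ∑ y, ENNReal.ofReal (K x y) * hitProbWithin K A n y := by
  have hsupp : Function.support
      ({l | IsFirstHitPath K A x l ∧ l.length ≤ n + 2}.indicator (pathProb K)) ⊆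
        Set.range (List.cons x) := by
    intro l hl
    obtain ⟨y, t, rfl, -⟩ :=
      (isFirstHitPath_iff_of_notMem hx).mp (Set.mem_of_indicator_ne_zero hl).1
    exact ⟨_, rfl⟩
  simp only [hitProbWithin, ← ENNReal.tsum_mul_left]
  rw [← (List.cons_injective).tsum_eq hsupp, ← Summable.tsum_finsetSum fun _ _ => ENNReal.summable]
  exact tsum_congr (indicator_cons_eq_sum hK hx n)

end Hitting

section Avoidance

variable [Fintype V] [DecidableEq V] {K : V → V → ℝ} {A : Finset V}

/-- Probability that the chain started at `x` stays outside `A` at times `0, …, n`. -/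
noncomputable def avoidProb (K : V → V → ℝ) (A : Finset V) : ℕ → V → ℝ≥0∞
  | 0, x => if x ∈ A then 0 else 1
  | n + 1, x => if x ∈ A then 0 else ∑ y, ENNReal.ofReal (K x y) * avoidProb K A n y

theorem avoidProb_of_mem {x : V} (hx : x ∈ A) (n : ℕ) : avoidProb K A n x = 0 := by
  cases n <;> simp [avoidProb, hx]

theorem hitProbWithin_add_avoidProb (hK : ∀ x y, 0 ≤ K x y) (hK1 : ∀ x, ∑ y, K x y = 1)
    (n : ℕ) (x : V) : hitProbWithin K A n x + avoidProb K A n x = 1 := by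
  induction n generalizing x with
  | zero =>
    by_cases hx : x ∈ A <;>
      simp [hitProbWithin_of_mem, hitProbWithin_zero_of_notMem, avoidProb, hx]
  | succ n ih =>
    by_cases hx : x ∈ A
    · rw [hitProbWithin_of_mem hx, avoidProb_of_mem hx, add_zero]
    simp only [hitProbWithin_succ_of_notMem hK hx, avoidProb, if_neg hx, ← Finset.sum_add_distrib,
      ← mul_add, ih, mul_one]
    rw [← ENNReal.ofReal_sum_of_nonneg fun y _ => hK x y, hK1, ENNReal.ofReal_one]

theorem avoidProb_le_one (hK : ∀ x y, 0 ≤ K x y) (hK1 : ∀ x, ∑ y, K x y = 1) (n : ℕ) (x : V) :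
    avoidProb K A n x ≤ 1 :=
  (hitProbWithin_add_avoidProb hK hK1 n x).symm ▸ le_add_self

/-- Markov property: surviving `s + t` steps means surviving `s` steps, then `t` more. -/
theorem avoidProb_add_le {t : ℕ} {C : ℝ≥0∞} (hC : ∀ y, avoidProb K A t y ≤ C) (s : ℕ) (x : V) :
    avoidProb K A (s + t) x ≤ avoidProb K A s x * C := by
  induction s generalizing x with
  | zero =>
    by_cases hx : x ∈ A
    · simp [avoidProb_of_mem hx]
    · simpa [avoidProb, hx] using hC x
  | succ s ih =>
    by_cases hx : x ∈ A
    · simp [avoidProb_of_mem hx]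
    rw [Nat.add_right_comm]
    simp only [avoidProb, if_neg hx, Finset.sum_mul, mul_assoc]
    exact Finset.sum_le_sum fun y _ => mul_le_mul_right (ih y) _

theorem avoidProb_antitone (hK : ∀ x y, 0 ≤ K x y) (hK1 : ∀ x, ∑ y, K x y = 1) (x : V) :
    Antitone fun n => avoidProb K A n x :=
  antitone_nat_of_succ_le fun n =>
    (avoidProb_add_le (avoidProb_le_one hK hK1 1) n x).trans_eq (mul_one _)

theorem hitProbWithin_pos_of_pow_pos (hK : ∀ x y, 0 ≤ K x y) {a : V} (ha : a ∈ A) (n : ℕ) (x : V)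
    (hxa : 0 < (Matrix.of K ^ n) x a) : 0 < hitProbWithin K A n x := by
  induction n generalizing x with
  | zero =>
    obtain rfl : x = a := by by_contra h; simp [Matrix.one_apply_ne h] at hxa
    simp [hitProbWithin_of_mem ha]
  | succ n ih =>
    by_cases hx : x ∈ A
    · simp [hitProbWithin_of_mem hx]
    rw [pow_succ', Matrix.mul_apply] at hxa
    obtain ⟨z, -, hz⟩ := Finset.exists_lt_of_sum_lt (f := fun _ => (0 : ℝ)) (by simpa using hxa)
    have hKz : 0 < K x z := (hK x z).lt_of_ne fun h => by simp [← h] at hz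
    rw [hitProbWithin_succ_of_notMem hK hx]
    refine lt_of_lt_of_le ?_ (Finset.single_le_sum (fun _ _ => zero_le) (Finset.mem_univ z))
    exact ENNReal.mul_pos (ENNReal.ofReal_pos.mpr hKz).ne'
      (ih z (pos_of_mul_pos_right hz hKz.le)).ne'

theorem exists_avoidProb_le_pow (hK : ∀ x y, 0 ≤ K x y) (hK1 : ∀ x, ∑ y, K x y = 1)
    (hreach : ∀ x, ∃ a ∈ A, ∃ n, 0 < (Matrix.of K ^ n) x a) :
    ∃ m : ℕ, ∃ c < 1, ∀ k x, avoidProb K A (k * m) x ≤ c ^ k := by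
  have hlt (x : V) : ∃ n, avoidProb K A n x < 1 := by
    obtain ⟨a, ha, n, hn⟩ := hreach x
    refine ⟨n, ?_⟩
    rw [← hitProbWithin_add_avoidProb hK hK1 n x, add_comm]
    exact ENNReal.lt_add_right ((avoidProb_le_one hK hK1 n x).trans_lt ENNReal.one_lt_top).ne
      (hitProbWithin_pos_of_pow_pos hK ha n x hn).ne'
  choose n hn using hlt
  set m := Finset.univ.sup n
  have hc (x : V) : avoidProb K A m x ≤ Finset.univ.sup fun y => avoidProb K A m y :=
    Finset.le_sup (f := fun y => avoidProb K A m y) (Finset.mem_univ x)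
  refine ⟨m, Finset.univ.sup fun y => avoidProb K A m y, (Finset.sup_lt_iff zero_lt_one).mpr
    fun x _ => (avoidProb_antitone hK hK1 x (Finset.le_sup (Finset.mem_univ x))).trans_lt (hn x),
    fun k => ?_⟩
  induction k with
  | zero => simpa using avoidProb_le_one hK hK1 0
  | succ k ih =>
    intro x
    rw [Nat.succ_mul, pow_succ]
    exact (avoidProb_add_le hc (k * m) x).trans (mul_le_mul_left (ih x) _)

theorem hitProb_le_one (hK : ∀ x y, 0 ≤ K x y) (hK1 : ∀ x, ∑ y, K x y = 1) (x : V) :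
    hitProb K A x ≤ 1 := by
  rw [hitProb, ENNReal.tsum_eq_iSup_sum]
  refine iSup_le fun s => ?_
  let n := s.sup List.length
  calc ∑ l ∈ s, {l | IsFirstHitPath K A x l}.indicator (pathProb K) l
      ≤ ∑ l ∈ s, {l | IsFirstHitPath K A x l ∧ l.length ≤ n + 1}.indicator (pathProb K) l := by
        refine Finset.sum_le_sum fun l hl => Set.indicator_apply_le' (fun h => ?_) fun _ => zero_le
        rw [Set.indicator_of_mem]
        exact ⟨h, (Finset.le_sup (f := List.length) hl).trans n.le_succ⟩
    _ ≤ hitProbWithin K A n x := ENNReal.sum_le_tsum s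
    _ ≤ 1 := (hitProbWithin_add_avoidProb hK hK1 n x).symm ▸ le_self_add

theorem hitProb_eq_one (hK : ∀ x y, 0 ≤ K x y) (hK1 : ∀ x, ∑ y, K x y = 1)
    (hreach : ∀ x, ∃ a ∈ A, ∃ n, 0 < (Matrix.of K ^ n) x a) (x : V) : hitProb K A x = 1 := by
  obtain ⟨m, c, hc, hdecay⟩ := exists_avoidProb_le_pow hK hK1 hreach
  refine le_antisymm (hitProb_le_one hK hK1 x) (ENNReal.le_of_forall_pos_le_add fun ε hε _ => ?_)
  obtain ⟨k, hk⟩ := ((ENNReal.tendsto_pow_atTop_nhds_zero_of_lt_one hc).eventually_lt_const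
    (ENNReal.coe_pos.mpr hε)).exists
  calc 1 = hitProbWithin K A (k * m) x + avoidProb K A (k * m) x :=
        (hitProbWithin_add_avoidProb hK hK1 _ x).symm
    _ ≤ hitProb K A x + ε := add_le_add (hitProbWithin_le_hitProb _ x) ((hdecay k x).trans hk.le)

end Avoidance

section Golf

variable [DecidableEq V] {K : V → V → ℝ} {A : Finset V} {N : ℕ}

/-- An empty path `w k` counts as ending at its start `S k`; this never happens in a golf
sequence. -/
def occupiedHoles (S : Fin N → V) (w : Fin N → List V) (j : Fin N) : Finset V :=
  (Finset.univ.filter (· < j)).image fun k => (w k).getLastD (S k)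

def IsSuccessiveFirstHit (K : V → V → ℝ) (A : Finset V) (S : Fin N → V) (w : Fin N → List V) :
    Prop :=
  ∀ j, IsFirstHitPath K (A \ occupiedHoles S w j) (S j) (w j)

theorem occupiedHoles_eq_image {S F : Fin N → V} {w : Fin N → List V}
    (hF : ∀ k, (w k).getLast? = some (F k)) (j : Fin N) :
    occupiedHoles S w j = (Finset.univ.filter (· < j)).image F := by
  simp [occupiedHoles, List.getLastD_eq_getLast?, hF]

theorem isGolfSequenceKer_iff {S : Fin N → V} {w : Fin N → List V} :
    IsGolfSequenceKer K A S w ↔ IsSuccessiveFirstHit K A S w := by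
  constructor
  · rintro ⟨F, hinj, h⟩ j
    obtain ⟨hne, hch, hhd, hlast, hmem, hdl⟩ := h j
    have hocc := occupiedHoles_eq_image (S := S) (fun k => (h k).2.2.2.1) j
    refine ⟨hne, hch, hhd, fun v hv hvA => ?_, F j, ?_, hlast⟩
    · obtain ⟨hvA, hvocc⟩ := Finset.mem_sdiff.mp hvA
      obtain ⟨k, hk, rfl⟩ := hdl v hv hvA
      exact hvocc (hocc ▸ Finset.mem_image_of_mem F (by simpa using hk))
    · rw [hocc, Finset.mem_sdiff, Finset.mem_image]
      exact ⟨hmem, fun ⟨k, hk, hkj⟩ => (Finset.mem_filter.mp hk).2.ne (hinj hkj)⟩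
  · intro h
    have hlast (j : Fin N) : (w j).getLast? = some ((w j).getLastD (S j)) := by
      obtain ⟨-, -, -, -, a, -, hl⟩ := h j
      rw [List.getLastD_eq_getLast?, hl, Option.getD_some]
    refine ⟨fun j => (w j).getLastD (S j), Function.Injective.of_lt_imp_ne fun k j hkj hF => ?_,
      fun j => ?_⟩
    · have := (Finset.mem_sdiff.mp ((h j).getLastD_mem (S j))).2
      exact this (Finset.mem_image.mpr ⟨k, by simpa using hkj, hF⟩)
    · obtain ⟨hne, hch, hhd, hdl, -⟩ := h j
      refine ⟨hne, hch, hhd, hlast j, (Finset.mem_sdiff.mp ((h j).getLastD_mem (S j))).1,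
        fun v hv hvA => ?_⟩
      have hvocc : v ∈ occupiedHoles S w j := by
        by_contra hvocc
        exact hdl v hv (Finset.mem_sdiff.mpr ⟨hvA, hvocc⟩)
      obtain ⟨k, hk, rfl⟩ := Finset.mem_image.mp hvocc
      exact ⟨k, (Finset.mem_filter.mp hk).2, rfl⟩

theorem occupiedHoles_cons_zero (x : V) (S : Fin N → V) (l : List V) (w : Fin N → List V) :
    occupiedHoles (Fin.cons x S) (Fin.cons l w) 0 = ∅ := by
  simp [occupiedHoles]

theorem occupiedHoles_cons_succ (x : V) (S : Fin N → V) (l : List V) (w : Fin N → List V)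
    (j : Fin N) :
    occupiedHoles (Fin.cons x S) (Fin.cons l w) j.succ =
      insert (l.getLastD x) (occupiedHoles S w j) := by
  ext v
  simp [occupiedHoles, Fin.exists_fin_succ, Fin.succ_lt_succ_iff, eq_comm]

theorem isSuccessiveFirstHit_cons_iff {x : V} {S : Fin N → V} {l : List V} {w : Fin N → List V} :
    IsSuccessiveFirstHit K A (Fin.cons x S) (Fin.cons l w) ↔
      IsFirstHitPath K A x l ∧ IsSuccessiveFirstHit K (A.erase (l.getLastD x)) S w := by
  simp only [IsSuccessiveFirstHit, Fin.forall_fin_succ, occupiedHoles_cons_zero,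
    occupiedHoles_cons_succ, Finset.sdiff_empty, Finset.sdiff_insert, Finset.erase_sdiff_comm,
    Fin.cons_zero, Fin.cons_succ]

theorem card_filter_unoccupied {H : Finset V} {S : Fin N → V} {w : Fin N → List V}
    (hw : IsGolfSequenceKer K H S w) :
    (H.filter fun f => ∀ j, (w j).getLast? ≠ some f).card = H.card - N := by
  obtain ⟨F, hinj, h⟩ := hw
  have : (H.filter fun f => ∀ j, (w j).getLast? ≠ some f) = H \ Finset.univ.image F := by
    ext f
    simp [(h _).2.2.2.1]
  rw [this, Finset.card_sdiff_of_subset, Finset.card_image_of_injective _ hinj, Finset.card_univ,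
    Fintype.card_fin]
  exact Finset.image_subset_iff.mpr fun j _ => (h j).2.2.2.2.1

theorem indicator_isSuccessiveFirstHit_cons (A : Finset V) (x : V) (S : Fin N → V) (l : List V)
    (w : Fin N → List V) :
    {w | IsSuccessiveFirstHit K A (Fin.cons x S) w}.indicator (seqProb K) (Fin.cons l w) =
      {l | IsFirstHitPath K A x l}.indicator (pathProb K) l *
        {w | IsSuccessiveFirstHit K (A.erase (l.getLastD x)) S w}.indicator (seqProb K) w := by
  classical
  by_cases hl : IsFirstHitPath K A x l <;>
    simp [Set.indicator_apply, isSuccessiveFirstHit_cons_iff, seqProb_cons, hl]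

end Golf

section Termination

variable [Fintype V] [DecidableEq V] {K : V → V → ℝ} {N : ℕ}

theorem tsum_indicator_isSuccessiveFirstHit (hK : ∀ x y, 0 ≤ K x y) (hK1 : ∀ x, ∑ y, K x y = 1)
    (hirr : ∀ x y : V, ∃ n : ℕ, 0 < (Matrix.of K ^ n) x y) (A : Finset V) (S : Fin N → V)
    (hN : N ≤ A.card) :
    ∑' w, {w | IsSuccessiveFirstHit K A S w}.indicator (seqProb K) w = 1 := by
  induction N generalizing A with
  | zero =>
    rw [tsum_eq_single Fin.elim0 fun w hw => absurd (Subsingleton.elim w _) hw,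
      Set.indicator_of_mem fun j => j.elim0]
    simp [seqProb]
  | succ N ih =>
    obtain ⟨a, ha⟩ := Finset.card_pos.mp (N.succ_pos.trans_le hN)
    have hrest (l : List V) :
        {l | IsFirstHitPath K A (S 0) l}.indicator (pathProb K) l *
          ∑' w, {w | IsSuccessiveFirstHit K (A.erase (l.getLastD (S 0))) (Fin.tail S) w}.indicator
            (seqProb K) w = {l | IsFirstHitPath K A (S 0) l}.indicator (pathProb K) l := by
      by_cases hl : IsFirstHitPath K A (S 0) l
      · rw [ih _ _ (by rw [Finset.card_erase_of_mem (hl.getLastD_mem _)]; omega), mul_one]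
      · rw [Set.indicator_of_notMem (s := {l | IsFirstHitPath K A (S 0) l}) hl, zero_mul]
    rw [← Fin.cons_self_tail S, ← (Fin.consEquiv fun _ => List V).tsum_eq]
    simp only [Fin.consEquiv, Equiv.coe_fn_mk, indicator_isSuccessiveFirstHit_cons]
    rw [ENNReal.tsum_prod']
    simp only [ENNReal.tsum_mul_left, hrest]
    exact hitProb_eq_one hK hK1 (fun x => ⟨a, ha, hirr x a⟩) (S 0)

theorem tsum_golf_seqProb (hK : ∀ x y, 0 ≤ K x y) (hK1 : ∀ x, ∑ y, K x y = 1)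
    (hirr : ∀ x y : V, ∃ n : ℕ, 0 < (Matrix.of K ^ n) x y) {H : Finset V} (hN : N ≤ H.card)
    (S : Fin N → V) :
    ∑' w : {w : Fin N → List V // IsGolfSequenceKer K H S w}, seqProb K w.1 = 1 := by
  refine (tsum_subtype {w | IsGolfSequenceKer K H S w} (seqProb K)).trans ?_
  simp_rw [isGolfSequenceKer_iff]
  exact tsum_indicator_isSuccessiveFirstHit hK hK1 hirr H S hN

theorem sum_tsum_golf_unoccupied (hK : ∀ x y, 0 ≤ K x y) (hK1 : ∀ x, ∑ y, K x y = 1)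
    (hirr : ∀ x y : V, ∃ n : ℕ, 0 < (Matrix.of K ^ n) x y) {H : Finset V} (hN : N ≤ H.card)
    (S : Fin N → V) :
    ∑ f ∈ H, ∑' w : {w : Fin N → List V //
      IsGolfSequenceKer K H S w ∧ ∀ j, (w j).getLast? ≠ some f}, seqProb K w.1 =
        (H.card - N : ℕ) := by
  classical
  have hterm (w : Fin N → List V) :
      ∑ f ∈ H,
          {w | IsGolfSequenceKer K H S w ∧ ∀ j, (w j).getLast? ≠ some f}.indicator (seqProb K) w =
        (H.card - N : ℕ) * {w | IsGolfSequenceKer K H S w}.indicator (seqProb K) w := by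
    by_cases hw : IsGolfSequenceKer K H S w
    · simp only [Set.indicator_apply, Set.mem_ofPred_eq, hw, true_and, if_true]
      rw [← Finset.sum_filter, Finset.sum_const, nsmul_eq_mul, card_filter_unoccupied hw]
    · simp [hw]
  have hsub (P : (Fin N → List V) → Prop) :
      ∑' w : {w // P w}, seqProb K w.1 = ∑' w, {w | P w}.indicator (seqProb K) w :=
    tsum_subtype {w | P w} _
  rw [Finset.sum_congr rfl fun f _ => hsub _, ← Summable.tsum_finsetSum fun _ _ => ENNReal.summable,
    tsum_congr hterm, ENNReal.tsum_mul_left, ← hsub, tsum_golf_seqProb hK hK1 hirr hN S, mul_one]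

end Termination

end StochasticGolf

theorem stochastic_golf_sequence_terminates_general
    {V : Type*} [Fintype V] [DecidableEq V]
    (K : V → V → ℝ)
    (hKnonneg : ∀ x y, 0 ≤ K x y)
    (hKstoch : ∀ x, ∑ y, K x y = 1)
    (hirr : ∀ x y : V, ∃ n : ℕ, 0 < ((Matrix.of K) ^ n) x y)
    (HoleSet : Finset V) {N : ℕ} (hN : N ≤ HoleSet.card)
    (S : Fin N → V) :
    (∑' w : {w : Fin N → List V // IsGolfSequenceKer K HoleSet S w},
        ∏ j, pathWeight K (w.1 j)) = 1 ∧
    (N = HoleSet.card - 1 → HoleSet.card ≥ 1 →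
      ∑ f ∈ HoleSet,
        (∑' w : {w : Fin N → List V // IsGolfSequenceKer K HoleSet S w ∧
            ∀ j, (w j).getLast? ≠ some f},
          ∏ j, pathWeight K (w.1 j)) = 1) := by
  simp only [StochasticGolf.tsum_prod_pathWeight_eq_toReal hKnonneg]
  refine ⟨by rw [StochasticGolf.tsum_golf_seqProb hKnonneg hKstoch hirr hN S, ENNReal.toReal_one],
    fun hN1 hH => ?_⟩
  have hfree := StochasticGolf.sum_tsum_golf_unoccupied hKnonneg hKstoch hirr hN S
  rw [← ENNReal.toReal_sum (ENNReal.sum_ne_top.mp (hfree ▸ ENNReal.natCast_ne_top _)), hfree,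
    show HoleSet.card - N = 1 by omega, Nat.cast_one, ENNReal.toReal_one]

/-- stochastic golf termination.  For an irreducible stochastic
kernel `K` on a finite set `V`, starting points outside the hole set and at
most `|HoleSet|` balls, the stochastic golf sequence terminates almost surely:
the total probability of all golf sequences is `1`.  Moreover, if
`N = |HoleSet| − 1`, the probabilities that a given hole `f` remains
unoccupied sum to `1` over `f ∈ HoleSet`. -/
theorem stochastic_golf_sequence_terminates
    {V : Type*} [Fintype V] [DecidableEq V] [Nonempty V]
    (K : V → V → ℝ)
    (hKnonneg : ∀ x y, 0 ≤ K x y)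
    (hKstoch : ∀ x, ∑ y, K x y = 1)
    (hirr : ∀ x y : V, ∃ n : ℕ, 0 < ((Matrix.of K) ^ n) x y)
    (HoleSet : Finset V) {N : ℕ} (hN : N ≤ HoleSet.card)
    (S : Fin N → V) (hS : ∀ j, S j ∉ HoleSet) :
    (∑' w : {w : Fin N → List V // IsGolfSequenceKer K HoleSet S w},
        ∏ j, pathWeight K (w.1 j)) = 1 ∧
    (N = HoleSet.card - 1 → HoleSet.card ≥ 1 →
      ∑ f ∈ HoleSet,
        (∑' w : {w : Fin N → List V // IsGolfSequenceKer K HoleSet S w ∧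
            ∀ j, (w j).getLast? ≠ some f},
          ∏ j, pathWeight K (w.1 j)) = 1) :=
  stochastic_golf_sequence_terminates_general K hKnonneg hKstoch hirr HoleSet hN S
end

section
/- Stationarity of the LastExitTree chain: let ←M be an irreducible stochastic kernel positive on a finite connected graph G. The Markov chain on rooted spanning trees of G with kernel Q((t,r),(t',r')) = ←M_{r,r'} if (t',r') is obtained from (t,r) by adding edge (r,r') and deleting the outgoing edge of r' (and 0 otherwise), has stationary distribution π(t,r) proportional to ∏_{e ∈ E(t,r)} ←M_e; i.e., for every (t',r'), ∑_{(t,r)} π(t,r) Q((t,r),(t',r')) = π(t',r'). -/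
/-!
A predecessor `(r, p)` of `(p', r')` is determined by `x = p r'`: redirecting the root `r` of `p`
to `r'` gives the same map as redirecting `r'` in `p'` to `x`, and `r` is the vertex of the cycle
of that map through `r'` which is sent to `r'`. Conversely every `x` equal or adjacent to `r'`
arises, by cutting this cycle just before `r'`. The same identity turns the weight of `(r, p)`
times `K r r'` into the weight of `(p', r')` times `K r' x`, so stationarity reduces to
`∑ x, K r' x = 1`.
-/

open scoped Classical

/-- The last-exit-tree move: from the rooted tree `(p, r)` and a step of the
walk from `r` to `r'`, add the oriented edge `(r, r')` and delete the outgoing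
edge of `r'`; the result is the parent map of a tree rooted at `r'`. -/
def treeStep {V : Type*} [DecidableEq V] (p : V → V) (r r' : V) : V → V :=
  fun u => if u = r ∨ u = r' then r' else p u

open Finset Function

namespace Function

variable {α : Type*}

theorem exists_iterate_eq_of_redirect {f g : α → α} {b c : α}
    (hf : ∀ u, ∃ n, f^[n] u = c) (hc : ∃ n, g^[n] c = b)
    (hgf : ∀ u, u ≠ b → u ≠ c → g u = f u) (u : α) : ∃ n, g^[n] u = b := by
  obtain ⟨n, hn⟩ := hf u
  induction n generalizing u with
  | zero =>
    obtain rfl : u = c := hn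
    exact hc
  | succ n ih =>
    by_cases hub : u = b
    · exact ⟨0, hub⟩
    by_cases huc : u = c
    · rw [huc]; exact hc
    obtain ⟨m, hm⟩ := ih (f u) hn
    exact ⟨m + 1, by rw [iterate_succ_apply, hgf u hub huc, hm]⟩

variable [DecidableEq α]

theorem iterate_update_of_forall_lt_ne {f : α → α} {a b y : α} {n : ℕ}
    (h : ∀ k < n, f^[k] y ≠ a) : (update f a b)^[n] y = f^[n] y := by
  induction n with
  | zero => rfl
  | succ n ih =>
    rw [iterate_succ_apply', iterate_succ_apply', ih fun k hk => h k (by omega),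
      update_of_ne (h n n.lt_succ_self)]

theorem mem_periodicPts_update {f : α → α} {a y : α} {n : ℕ} (h : f^[n] y = a) :
    a ∈ periodicPts (update f a y) := by
  have hex : ∃ n, f^[n] y = a := ⟨n, h⟩
  refine mk_mem_periodicPts (Nat.succ_pos (Nat.find hex)) ?_
  change (update f a y)^[Nat.find hex + 1] a = a
  rw [iterate_succ_apply, update_self,
    iterate_update_of_forall_lt_ne fun k hk => Nat.find_min hex hk, Nat.find_spec hex]

theorem exists_apply_eq_iterate_update_self_eq {f : α → α} {x : α} (hx : x ∈ periodicPts f) :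
    ∃ r, f r = x ∧ ∃ n, (update f r r)^[n] x = r := by
  set m := minimalPeriod f x
  have hm : m - 1 + 1 = m := Nat.sub_one_add_one (minimalPeriod_pos_of_mem_periodicPts hx).ne'
  have hfr : f (f^[m - 1] x) = x := by
    rw [← iterate_succ_apply' f, Nat.succ_eq_add_one, hm, iterate_minimalPeriod]
  refine ⟨f^[m - 1] x, hfr, m - 1, ?_⟩
  rw [iterate_update_of_forall_lt_ne]
  intro k hk hkr
  have hper : IsPeriodicPt f (k + 1) x := by
    change f^[k + 1] x = x
    rw [iterate_succ_apply', hkr, hfr]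
  exact not_isPeriodicPt_of_pos_of_lt_minimalPeriod k.succ_ne_zero (by omega) hper

end Function

theorem prod_erase_mul_eq_prod_update {V M : Type*} [Fintype V] [DecidableEq V] [CommMonoid M]
    (K : V → V → M) (p : V → V) (r y : V) :
    (∏ u ∈ univ.erase r, K u (p u)) * K r y = ∏ u, K u (update p r y u) := by
  rw [← prod_erase_mul _ _ (mem_univ r), update_self]
  congr 1
  exact prod_congr rfl fun u hu => by rw [update_of_ne (ne_of_mem_erase hu)]

section TreeStep

variable {V : Type*} [DecidableEq V]

theorem update_eq_update_treeStep {p : V → V} {r : V} (hr : p r = r) (r' : V) :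
    update p r r' = update (treeStep p r r') r' (p r') := by
  funext u
  by_cases hu' : u = r'
  · subst hu'
    by_cases hu : u = r
    · subst hu; simp [hr]
    · simp [hu]
  · by_cases hu : u = r
    · subst hu; simp [treeStep, hu']
    · simp [treeStep, hu, hu']

theorem treeStep_self {p : V → V} {r : V} (hr : p r = r) : treeStep p r r = p := by
  funext u
  by_cases hu : u = r
  · simp [treeStep, hu, hr]
  · simp [treeStep, hu]

theorem prod_erase_mul_treeStep [Fintype V] {M : Type*} [CommMonoid M] (K : V → V → M)
    {p : V → V} {r : V} (hr : p r = r) (r' : V) :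
    (∏ u ∈ univ.erase r, K u (p u)) * K r r' =
      (∏ u ∈ univ.erase r', K u (treeStep p r r' u)) * K r' (p r') := by
  rw [prod_erase_mul_eq_prod_update, prod_erase_mul_eq_prod_update,
    update_eq_update_treeStep hr]

variable {G : SimpleGraph V}

theorem IsRootedSpanningTree.eq_of_treeStep_eq {p₁ p₂ : V → V} {r₁ r₂ r' : V}
    (ht₁ : IsRootedSpanningTree G p₁ r₁) (ht₂ : IsRootedSpanningTree G p₂ r₂)
    (hstep : treeStep p₁ r₁ r' = treeStep p₂ r₂ r') (hx : p₁ r' = p₂ r') :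
    r₁ = r₂ ∧ p₁ = p₂ := by
  have hq : update p₁ r₁ r' = update p₂ r₂ r' := by
    rw [update_eq_update_treeStep ht₁.1, update_eq_update_treeStep ht₂.1, hstep, hx]
  obtain ⟨n₁, hn₁⟩ := ht₁.2.2 r'
  obtain ⟨n₂, hn₂⟩ := ht₂.2.2 r'
  obtain ⟨m₁, hm₁, hper₁⟩ := mem_periodicPts.1 (mem_periodicPts_update hn₁)
  obtain ⟨m₂, hm₂, hper₂⟩ := mem_periodicPts.1 (mem_periodicPts_update hn₂)
  rw [← hq] at hper₂
  have hr : r₁ = r₂ :=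
    hper₁.eq_of_apply_eq hper₂ hm₁ hm₂ (by rw [update_self, hq, update_self])
  subst hr
  refine ⟨rfl, funext fun u => ?_⟩
  by_cases hu : u = r₁
  · rw [hu, ht₁.1, ht₂.1]
  · simpa [hu] using congrFun hq u

theorem IsRootedSpanningTree.exists_treeStep_eq {p' : V → V} {r' x : V}
    (ht' : IsRootedSpanningTree G p' r') (hx : G.Adj r' x) :
    ∃ r p, IsRootedSpanningTree G p r ∧ treeStep p r r' = p' ∧ p r' = x := by
  set q := update p' r' x
  obtain ⟨n, hn⟩ := ht'.2.2 x
  obtain ⟨r, hqr, m, hm⟩ := exists_apply_eq_iterate_update_self_eq (mem_periodicPts_update hn)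
  have hrr' : r ≠ r' := by
    rintro rfl
    exact hx.ne (by simpa [q] using hqr.symm)
  have hp'r : p' r = r' := by simpa [q, hrr'] using hqr
  set p := update q r r
  have hpr' : p r' = x := by simp [p, q, hrr'.symm]
  have hpp' : ∀ u, u ≠ r → u ≠ r' → p u = p' u := fun u hu hu' => by simp [p, q, hu, hu']
  refine ⟨r, p, ⟨update_self .., fun u hu => ?_,
    exists_iterate_eq_of_redirect ht'.2.2 ⟨m, hm⟩ hpp'⟩, funext fun u => ?_, hpr'⟩
  · by_cases hu' : u = r'
    · rw [hu', hpr']; exact hx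
    · rw [hpp' u hu hu']; exact ht'.2.1 u hu'
  · by_cases hu : u = r
    · simp [treeStep, hu, hp'r]
    by_cases hu' : u = r'
    · simp [treeStep, hu', ht'.1]
    · simp [treeStep, hu, hu', hpp' u hu hu']

theorem IsRootedSpanningTree.bijOn_apply_treeStep_preimage {p' : V → V} {r' : V}
    (ht' : IsRootedSpanningTree G p' r') :
    Set.BijOn (fun z : V × (V → V) => z.2 r')
      {z | IsRootedSpanningTree G z.2 z.1 ∧ treeStep z.2 z.1 r' = p'}
      {x | x = r' ∨ G.Adj r' x} := by
  refine ⟨?_, ?_, ?_⟩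
  · rintro ⟨r, p⟩ ⟨ht, -⟩
    by_cases h : r' = r
    · subst h; exact Or.inl ht.1
    · exact Or.inr (ht.2.1 r' h)
  · rintro ⟨r₁, p₁⟩ ⟨ht₁, hs₁⟩ ⟨r₂, p₂⟩ ⟨ht₂, hs₂⟩ hx
    obtain ⟨rfl, rfl⟩ := ht₁.eq_of_treeStep_eq ht₂ (hs₁.trans hs₂.symm) hx
    rfl
  · rintro x (rfl | hx)
    · exact ⟨(x, p'), ⟨ht', treeStep_self ht'.1⟩, ht'.1⟩
    · obtain ⟨r, p, ht, hs, hpx⟩ := ht'.exists_treeStep_eq hx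
      exact ⟨(r, p), ⟨ht, hs⟩, hpx⟩

end TreeStep

theorem lastExitTree_chain_stationary_general
    {V : Type*} [Fintype V] [DecidableEq V]
    (G : SimpleGraph V)
    (K : V → V → ℝ)
    (hKnonneg : ∀ x y, 0 ≤ K x y)
    (hKstoch : ∀ x, ∑ y, K x y = 1)
    (hpos : ∀ x y, 0 < K x y ↔ G.Adj x y)
    (p' : V → V) (r' : V) (htree' : IsRootedSpanningTree G p' r') :
    (∑ r : V, ∑ p : V → V,
        if IsRootedSpanningTree G p r ∧ treeStep p r r' = p'
        then (∏ u ∈ Finset.univ.erase r, K u (p u)) * K r r' else 0) =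
      ∏ u ∈ Finset.univ.erase r', K u (p' u) := by
  set C := ∏ u ∈ univ.erase r', K u (p' u)
  have hbij := htree'.bijOn_apply_treeStep_preimage
  rw [← coe_filter_univ, ← coe_filter_univ] at hbij
  calc _ = ∑ z ∈ univ.filter fun z : V × (V → V) =>
          IsRootedSpanningTree G z.2 z.1 ∧ treeStep z.2 z.1 r' = p',
          (∏ u ∈ univ.erase z.1, K u (z.2 u)) * K z.1 r' := by
        rw [sum_filter, Fintype.sum_prod_type]
    _ = ∑ z ∈ univ.filter fun z : V × (V → V) =>
          IsRootedSpanningTree G z.2 z.1 ∧ treeStep z.2 z.1 r' = p', C * K r' (z.2 r') :=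
        sum_congr rfl fun z hz => by
          obtain ⟨ht, hs⟩ := (mem_filter.1 hz).2
          rw [prod_erase_mul_treeStep K ht.1, hs]
    _ = ∑ x ∈ univ.filter fun x => x = r' ∨ G.Adj r' x, C * K r' x :=
        sum_nbij _ (fun _ hz => hbij.mapsTo hz) hbij.injOn hbij.surjOn fun _ _ => rfl
    _ = ∑ x, C * K r' x := by
        refine sum_subset (filter_subset _ _) fun x _ hx => ?_
        have hK : 0 = K r' x :=
          (hKnonneg r' x).eq_of_not_lt fun h => hx (by simp [(hpos r' x).1 h])
        rw [← hK, mul_zero]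
    _ = C := by rw [← mul_sum, hKstoch, mul_one]

/-- stationarity of the last-exit-tree chain.  For an
irreducible stochastic kernel `K` positive on a finite connected graph `G`,
the measure `π (t, r) = ∏_{e ∈ E(t,r)} K e` on rooted spanning trees is
stationary for the tree chain whose transitions `(t, r) → (t', r')` have
probability `K r r'` when `t'` is obtained from `t` by adding the edge
`(r, r')` and deleting the outgoing edge of `r'`. -/
theorem lastExitTree_chain_stationary
    {V : Type*} [Fintype V] [DecidableEq V]
    (hcard : 2 ≤ Fintype.card V)
    (G : SimpleGraph V) (hconn : G.Connected)
    (K : V → V → ℝ)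
    (hKnonneg : ∀ x y, 0 ≤ K x y)
    (hKstoch : ∀ x, ∑ y, K x y = 1)
    (hpos : ∀ x y, 0 < K x y ↔ G.Adj x y)
    (p' : V → V) (r' : V) (htree' : IsRootedSpanningTree G p' r') :
    (∑ r : V, ∑ p : V → V,
        if IsRootedSpanningTree G p r ∧ treeStep p r r' = p'
        then (∏ u ∈ Finset.univ.erase r, K u (p u)) * K r r' else 0) =
      ∏ u ∈ Finset.univ.erase r', K u (p' u) :=
  lastExitTree_chain_stationary_general G K hKnonneg hKstoch hpos p' r' htree'
end

section
/- Passport of a first-entrance path: if w ∈ Paths(t,r,f) (a covering path from r with FirstEntranceTree(w) = (t,r) and last vertex f), then the passport of Heap(w) satisfies: for every u ∈ V, the number of edges out of u in Heap(w) equals the number into u, plus 1_{u=f} minus 1_{u=r}; i.e., OUTIN(Heap(w)) = [(N_u + 1_{u=f})_u, (N_u + 1_{u=r})_u] with N_f = 0, N_r ≥ 0, and N_u ≥ 1 for u ∉ {f, r}. -/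
/-- `l` encodes a covering path of `G` started at `r` and killed exactly at
the cover time. -/
def IsCoveringPathFrom {V : Type*} [DecidableEq V] (G : SimpleGraph V)
    (r : V) (l : List V) : Prop :=
  l ≠ [] ∧ List.Chain' G.Adj l ∧ l.head? = some r ∧ (∀ v : V, v ∈ l) ∧
    (∀ x, l.getLast? = some x → x ∉ l.dropLast)

/-- The first-entrance tree of the covering path `l` is the rooted spanning
tree with parent map `p` and root `r`. -/
def FirstEntranceTreeEq {V : Type*} [DecidableEq V] (l : List V)
    (p : V → V) (r : V) : Prop :=
  ∀ u : V, u ≠ r → p u = l.getD (l.idxOf u - 1) r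

/-!
Write the covering path as `r :: (m ++ [f])`; it has at least two vertices because it visits
all of them. Then `Heap(l)` has `m.count u + 1_{u=f}` edges out of `u` and `m.count u + 1_{u=r}`
edges into `u`, so `N := m.count` works: `f` is not in `m` because a path stopped at the cover
time visits its last vertex only once, and every vertex other than `r` and `f` lies in `m`.
-/

namespace List

variable {α : Type*}

theorem card_le_length_of_forall_mem [Fintype α] [DecidableEq α] {l : List α}
    (h : ∀ a, a ∈ l) : Fintype.card α ≤ l.length := by
  rw [← Finset.card_univ, ← Finset.univ_subset_iff.mp fun a _ => mem_toFinset.mpr (h a)]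
  exact toFinset_card_le l

theorem exists_eq_cons_append_singleton {l : List α} {a b : α} (ha : l.head? = some a)
    (hb : l.getLast? = some b) (hl : 2 ≤ l.length) : ∃ m, l = a :: (m ++ [b]) := by
  obtain ⟨ys, rfl⟩ := getLast?_eq_some_iff.mp hb
  cases ys with
  | nil => simp at hl
  | cons c m => exact ⟨m, by simp_all⟩

theorem dropLast_cons_append_singleton (a b : α) (m : List α) :
    (a :: (m ++ [b])).dropLast = a :: m := by
  rw [← cons_append, dropLast_concat]

end List

theorem passport_of_first_entrance_path_general
    {V : Type*} [Fintype V] [DecidableEq V]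
    (hcard : 2 ≤ Fintype.card V)
    (G : SimpleGraph V)
    (r f : V) (l : List V)
    (hcov : IsCoveringPathFrom G r l)
    (hlast : l.getLast? = some f) :
    ∃ N : V → ℕ, N f = 0 ∧ (∀ u, u ≠ f → u ≠ r → 1 ≤ N u) ∧
      ∀ u : V,
        l.tail.count u = N u + (if u = f then 1 else 0) ∧
        l.dropLast.count u = N u + (if u = r then 1 else 0) := by
  obtain ⟨-, -, hhead, hmem, hlast_once⟩ := hcov
  obtain ⟨m, rfl⟩ := List.exists_eq_cons_append_singleton hhead hlast
    (hcard.trans (List.card_le_length_of_forall_mem hmem))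
  have hf : f ∉ m := fun hfm => hlast_once f hlast <| by
    rw [List.dropLast_cons_append_singleton]; exact List.mem_cons_of_mem r hfm
  refine ⟨m.count, List.count_eq_zero.mpr hf, fun u huf hur => ?_, fun u => ?_⟩
  · have hu : u ∈ m := by simpa [hur, huf] using hmem u
    exact List.count_pos_iff.mpr hu
  · simp [List.dropLast_cons_append_singleton, List.count_cons, @eq_comm _ f, @eq_comm _ r]

/-- passport of a first-entrance path.  If `l ∈ Paths(t,r,f)`
(a covering path from `r` with first-entrance tree `(t, r)` and last vertex
`f`), then, for every vertex `u`, the number of outgoing edges of `u` in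
`Heap(l)` (the number of steps of `l` arriving at `u`, i.e. the count of `u`
in `l.tail`) equals `N u + 1_{u = f}`, and the number of incoming edges at `u`
(the count of `u` in `l.dropLast`) equals `N u + 1_{u = r}`, where `N f = 0`
and `N u ≥ 1` for `u ∉ {f, r}`. -/
theorem passport_of_first_entrance_path
    {V : Type*} [Fintype V] [DecidableEq V]
    (hcard : 2 ≤ Fintype.card V)
    (G : SimpleGraph V) (hconn : G.Connected)
    (r f : V) (p : V → V) (l : List V)
    (hcov : IsCoveringPathFrom G r l)
    (hfet : FirstEntranceTreeEq l p r)
    (hlast : l.getLast? = some f) :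
    ∃ N : V → ℕ, N f = 0 ∧ (∀ u, u ≠ f → u ≠ r → 1 ≤ N u) ∧
      ∀ u : V,
        l.tail.count u = N u + (if u = f then 1 else 0) ∧
        l.dropLast.count u = N u + (if u = r then 1 else 0) :=
  passport_of_first_entrance_path_general hcard G r f l hcov hlast
end
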